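/- arXiv:1403.7544 — 6 statements merged into one kernel-verified Lean document; each statement's English description precedes it below -/
import Mathlib

section
/- For all real numbers γ < -1/2 and β with -1 < β < -1/2, and every real A > 0, the series ∑_{i=1}^∞ (A+i)^γ i^β converges and satisfies ∑_{i=1}^∞ (A+i)^γ i^β ≤ C·A^{γ+β+1}, where C = ∫_0^∞ (1+y)^γ y^β dy, which is a finite constant. -/
/-!
Since `x ↦ (A + x)^γ x^β` is nonnegative and decreasing on `(0, ∞)`, each term of the series is
at most the integral of this function over the unit interval to its left, so the series is bounded
by `∫_0^∞ (A + x)^γ x^β dx`. The substitution `x = A y` turns that integral into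
`A^(γ+β+1) ∫_0^∞ (1 + y)^γ y^β dy`.
-/

open MeasureTheory Set

namespace AntitoneOn

variable {f : ℝ → ℝ}

theorem summable_pnat_of_integrableOn_Ioi (anti : AntitoneOn f (Ioi 0))
    (integrable : IntegrableOn f (Ioi 0)) (nonneg : ∀ t ∈ Ioi 0, 0 ≤ f t) :
    Summable (fun n : ℕ+ => f n) := by
  refine (summable_pnat_iff_summable_nat (f := fun n : ℕ => f n)).2 ?_
  refine summable_of_integrableOn_Ioi (N := 1) ?_ ?_ ?_
  · exact_mod_cast anti.mono (Ici_subset_Ioi.2 one_pos)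
  · exact_mod_cast integrable.mono_set (Ioi_subset_Ioi zero_le_one)
  · exact_mod_cast fun t (ht : 1 < t) => nonneg t (lt_trans one_pos ht)

/-- Unlike `AntitoneOn.tsum_add_one_le_integral`, only antitonicity on `(0, ∞)` is assumed (for
`x ^ β` with `β < 0` it fails on `[0, ∞)`, as `0 ^ β = 0`); the term `f 1` is instead compared
with the integral over `(0, 1]`. -/
theorem tsum_pnat_le_integral_Ioi (anti : AntitoneOn f (Ioi 0))
    (integrable : IntegrableOn f (Ioi 0)) (nonneg : ∀ t ∈ Ioi 0, 0 ≤ f t) :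
    ∑' n : ℕ+, f n ≤ ∫ x in Ioi 0, f x := by
  have hsum := (summable_pnat_iff_summable_succ (f := fun n : ℕ => f n)).1
    (anti.summable_pnat_of_integrableOn_Ioi integrable nonneg)
  have hfirst : f 1 ≤ ∫ x in Ioc 0 1, f x := by
    have h := setIntegral_ge_of_const_le_real (μ := volume) measurableSet_Ioc (by simp)
      (fun x hx => anti hx.1 (mem_Ioi.2 one_pos) hx.2)
      (integrable.mono_set Ioc_subset_Ioi_self)
    rwa [Real.volume_real_Ioc_of_le zero_le_one, sub_zero, mul_one] at h
  have htail : ∑' n : ℕ, f ↑(n + 1 + 1) ≤ ∫ x in Ioi 1, f x := by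
    have h := tsum_comp_add_le_integral (f := f) 1 ?_ ?_ ?_
    · rwa [Nat.cast_one] at h
    · exact_mod_cast anti.mono (Ici_subset_Ioi.2 one_pos)
    · exact_mod_cast integrable.mono_set (Ioi_subset_Ioi zero_le_one)
    · exact_mod_cast fun t (ht : 1 < t) => nonneg t (lt_trans one_pos ht)
  calc ∑' n : ℕ+, f n = f 1 + ∑' n : ℕ, f ↑(n + 1 + 1) := by
        rw [tsum_pnat_eq_tsum_succ (f := fun n : ℕ => f n), hsum.tsum_eq_zero_add]; simp
    _ ≤ (∫ x in Ioc 0 1, f x) + ∫ x in Ioi 1, f x := add_le_add hfirst htail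
    _ = ∫ x in Ioi 0, f x := by
        rw [← setIntegral_union (Ioc_disjoint_Ioi le_rfl) measurableSet_Ioi
          (integrable.mono_set Ioc_subset_Ioi_self)
          (integrable.mono_set (Ioi_subset_Ioi zero_le_one)), Ioc_union_Ioi_eq_Ioi zero_le_one]

end AntitoneOn

section AddRpowMulRpow

variable {a γ β : ℝ}

theorem antitoneOn_add_rpow_mul_rpow (ha : 0 ≤ a) (hγ : γ ≤ 0) (hβ : β ≤ 0) :
    AntitoneOn (fun x : ℝ => (a + x) ^ γ * x ^ β) (Ioi 0) := by
  intro x (hx : 0 < x) y (hy : 0 < y) hxy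
  exact mul_le_mul (Real.rpow_le_rpow_of_nonpos (by positivity) (by linarith) hγ)
    (Real.rpow_le_rpow_of_nonpos hx hxy hβ) (by positivity) (by positivity)

theorem integrableOn_Ioi_add_rpow_mul_rpow (ha : 0 < a) (hγ : γ ≤ 0) (hβ : -1 < β)
    (hγβ : γ + β < -1) : IntegrableOn (fun x : ℝ => (a + x) ^ γ * x ^ β) (Ioi 0) := by
  have hcont : ContinuousOn (fun x : ℝ => (a + x) ^ γ * x ^ β) (Ioi 0) := by
    refine ContinuousOn.mul ?_ ?_ <;> refine ContinuousOn.rpow_const (by fun_prop) ?_ <;>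
      intro x (hx : 0 < x) <;> left <;> positivity
  rw [← Ioc_union_Ioi_eq_Ioi zero_le_one]
  refine IntegrableOn.union ?_ ?_
  · refine Integrable.mono' ((intervalIntegral.intervalIntegrable_rpow' hβ).1.const_mul (a ^ γ))
      ((hcont.mono Ioc_subset_Ioi_self).aestronglyMeasurable measurableSet_Ioc) ?_
    refine ae_restrict_of_forall_mem measurableSet_Ioc fun x ⟨hx, _⟩ => ?_
    rw [Real.norm_of_nonneg (by positivity)]
    exact mul_le_mul_of_nonneg_right
      (Real.rpow_le_rpow_of_nonpos ha (by linarith) hγ) (by positivity)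
  · refine Integrable.mono' (integrableOn_Ioi_rpow_of_lt hγβ one_pos)
      ((hcont.mono (Ioi_subset_Ioi zero_le_one)).aestronglyMeasurable measurableSet_Ioi) ?_
    refine ae_restrict_of_forall_mem measurableSet_Ioi fun x (hx : 1 < x) => ?_
    have hx0 : 0 < x := lt_trans one_pos hx
    rw [Real.norm_of_nonneg (by positivity), Real.rpow_add hx0]
    exact mul_le_mul_of_nonneg_right
      (Real.rpow_le_rpow_of_nonpos hx0 (by linarith) hγ) (by positivity)

theorem integral_Ioi_add_rpow_mul_rpow (ha : 0 < a) :
    ∫ x in Ioi 0, (a + x) ^ γ * x ^ β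
      = (∫ y in Ioi 0, (1 + y) ^ γ * y ^ β) * a ^ (γ + β + 1) := by
  have hscale : ∫ y in Ioi 0, (a + a * y) ^ γ * (a * y) ^ β
      = a ^ (γ + β) * ∫ y in Ioi 0, (1 + y) ^ γ * y ^ β := by
    rw [← integral_const_mul]
    refine setIntegral_congr_fun measurableSet_Ioi fun y (hy : 0 < y) => ?_
    rw [show a + a * y = a * (1 + y) by ring, Real.mul_rpow ha.le (by positivity),
      Real.mul_rpow ha.le hy.le, Real.rpow_add ha]
    ring
  have hsubst := integral_comp_mul_left_Ioi' (fun x => (a + x) ^ γ * x ^ β) 0 ha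
  rw [mul_zero] at hsubst
  rw [← hsubst, smul_eq_mul, hscale, Real.rpow_add_one ha.ne']
  ring

end AddRpowMulRpow

/-- For `γ < -1/2`, `-1 < β < -1/2` and `A > 0`, the series `∑_{i=1}^∞ (A+i)^γ i^β`
converges and is bounded by `C·A^(γ+β+1)` with `C = ∫_0^∞ (1+y)^γ y^β dy`, a finite constant. -/
theorem stmt_2 (γ β A : ℝ) (hγ : γ < -1/2) (hβ1 : -1 < β) (hβ2 : β < -1/2) (hA : 0 < A) :
    IntegrableOn (fun y : ℝ => (1 + y) ^ γ * y ^ β) (Set.Ioi 0) ∧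
      Summable (fun i : ℕ+ => (A + (i : ℝ)) ^ γ * (i : ℝ) ^ β) ∧
      ∑' i : ℕ+, (A + (i : ℝ)) ^ γ * (i : ℝ) ^ β
        ≤ (∫ y in Set.Ioi (0 : ℝ), (1 + y) ^ γ * y ^ β) * A ^ (γ + β + 1) := by
  have hγβ : γ + β < -1 := by linarith
  have integrable := integrableOn_Ioi_add_rpow_mul_rpow hA (by linarith) hβ1 hγβ
  have anti := antitoneOn_add_rpow_mul_rpow (γ := γ) (β := β) hA.le (by linarith) (by linarith)
  have nonneg : ∀ x ∈ Ioi (0 : ℝ), 0 ≤ (A + x) ^ γ * x ^ β := fun x (hx : 0 < x) => by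
    positivity
  refine ⟨integrableOn_Ioi_add_rpow_mul_rpow one_pos (by linarith) hβ1 hγβ,
    anti.summable_pnat_of_integrableOn_Ioi integrable nonneg, ?_⟩
  rw [← integral_Ioi_add_rpow_mul_rpow hA]
  exact anti.tsum_pnat_le_integral_Ioi integrable nonneg
end

section
/- Let g^(1) and g^(2) be symmetric GHK(B)'s on (0,∞)^{k₁} and (0,∞)^{k₂} with homogeneity exponents α₁ and α₂ respectively. Suppose k₁ ≥ 2 or k₂ ≥ 2, and α₁ + α₂ > -(k₁+k₂+1)/2. Let r be an integer with 0 ≤ r ≤ min(k₁,k₂) if k₁ ≠ k₂, and 0 ≤ r ≤ k₁ - 1 if k₁ = k₂, and set K = k₁ + k₂ - 2r. Then for every x = (x₁,…,x_K) ∈ (0,∞)^K the integral (g^(1) ⊗_r g^(2))(x) := ∫_{(0,∞)^r} g^(1)(y₁,…,y_r, x₁,…,x_{k₁-r}) g^(2)(y₁,…,y_r, x_{k₁-r+1},…,x_K) dy₁…dy_r converges absolutely (for r = 0 it is the pointwise tensor product g^(1)(x₁,…,x_{k₁})g^(2)(x_{k₁+1},…,x_K)), and if g^(1) ⊗_r g^(2)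 is not almost everywhere zero, then it is a generalized Hermite kernel (GHK) on (0,∞)^K with homogeneity exponent α₁ + α₂ + r, which lies in (-(K+1)/2, -K/2). -/
open MeasureTheory

/-- The open positive orthant in `ℝ^k`. -/
def posOrthant (k : ℕ) : Set (Fin k → ℝ) := {y | ∀ i, 0 < y i}

/-- A measurable function `g : (0,∞)^k → ℝ` is a generalized Hermite kernel (GHK) with
homogeneity exponent `α ∈ (-(k+1)/2, -k/2)` if it is homogeneous of degree `α` on the
positive orthant and `∫_{(0,∞)^k} |g(𝟏+x) g(x)| dx < ∞`. -/
def IsGHK (k : ℕ) (α : ℝ) (g : (Fin k → ℝ) → ℝ) : Prop :=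
  Measurable g ∧
  (-((k : ℝ) + 1)/2 < α ∧ α < -(k : ℝ)/2) ∧
  (∀ lam : ℝ, 0 < lam → ∀ x ∈ posOrthant k, g (fun i => lam * x i) = lam ^ α * g x) ∧
  IntegrableOn (fun x => g (fun i => 1 + x i) * g x) (posOrthant k)

/-- A GHK of Class (B): in addition, `g` is a.e. continuous on the positive orthant and
`|g(x)| ≤ c (x₁+…+x_k)^α` for some `c > 0`. -/
def IsGHKB (k : ℕ) (α : ℝ) (g : (Fin k → ℝ) → ℝ) : Prop :=
  IsGHK k α g ∧
  (∀ᵐ x ∂(volume.restrict (posOrthant k)), ContinuousWithinAt g (posOrthant k) x) ∧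
  ∃ c : ℝ, 0 < c ∧ ∀ x ∈ posOrthant k, |g x| ≤ c * (∑ i, x i) ^ α

/-- A function on `(0,∞)^k` (given on all of `ℝ^k`) is symmetric if it is invariant under
every permutation of its arguments. -/
def IsSymmFun (k : ℕ) (g : (Fin k → ℝ) → ℝ) : Prop :=
  ∀ σ : Equiv.Perm (Fin k), ∀ x : Fin k → ℝ, g (x ∘ σ) = g x

/-- The contraction `(g1 ⊗_r g2)(x) = ∫_{(0,∞)^r} g1(y, x₁) g2(y, x₂) dy`, where
`g1` has `r + m₁` arguments, `g2` has `r + m₂` arguments, `x₁` is the first `m₁`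
coordinates of `x` and `x₂` the last `m₂` coordinates (for `r = 0` it is the pointwise
tensor product). -/
noncomputable def contract (r m₁ m₂ : ℕ)
    (g1 : (Fin (r + m₁) → ℝ) → ℝ) (g2 : (Fin (r + m₂) → ℝ) → ℝ)
    (x : Fin (m₁ + m₂) → ℝ) : ℝ :=
  ∫ y in posOrthant r,
    g1 (Fin.append y fun j : Fin m₁ => x (Fin.castAdd m₂ j)) *
      g2 (Fin.append y fun j : Fin m₂ => x (Fin.natAdd m₁ j))

open Set Real
open scoped Pointwise

/-!
Write `x = (u, v)` with `u ∈ (0,∞)^{m₁}`, `v ∈ (0,∞)^{m₂}`, and put `A = ∑ u`, `B = ∑ v`.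
Since `α ≤ 0`, `(∑ y + A)^α ≤ ∏ᵢ (A + yᵢ)^{α/r}`, so the Class (B) bounds dominate the integrand
of `g1 ⊗_r g2` by `∏ᵢ (A + yᵢ)^{α₁/r} (B + yᵢ)^{α₂/r}`. By Fubini this gives absolute convergence
and `|(g1 ⊗_r g2)(x)| ≤ C J^r` with `J = ∫₀^∞ (A + t)^{α₁/r} (B + t)^{α₂/r} dt`. Bounding
`(B + t)^q ≤ B^{q-ν} t^ν` (`q = α₂/r`) and substituting `t = A s` turns this into a block bound
`C' A^{m₁ s₁} B^{m₂ s₂}` with per-coordinate exponents `s₁, s₂ ∈ (-1, -1/2)`; the hypothesis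
`α₁ + α₂ > -(k₁ + k₂ + 1)/2` is what leaves room to choose `ν` this way. Splitting each block sum
into a product once more, a block bound on `F = g1 ⊗_r g2` makes `x ↦ F(𝟏 + x) F(x)` dominated by
`∏ᵢ (1 + xᵢ)^{sᵢ} xᵢ^{sᵢ}`, which is integrable exactly because `sᵢ ∈ (-1, -1/2)`.
Homogeneity of degree `α₁ + α₂ + r` comes from the substitution `y ↦ λ y`.
-/

lemma posOrthant_eq_pi (k : ℕ) : posOrthant k = univ.pi fun _ => Ioi (0 : ℝ) := by
  ext y; simp [posOrthant]

lemma measurableSet_posOrthant (k : ℕ) : MeasurableSet (posOrthant k) := by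
  rw [posOrthant_eq_pi]
  exact .univ_pi fun _ => measurableSet_Ioi

lemma posOrthant_zero : posOrthant 0 = univ :=
  eq_univ_of_forall fun _ i => i.elim0

lemma smul_posOrthant {k : ℕ} {c : ℝ} (hc : 0 < c) : c • posOrthant k = posOrthant k := by
  ext y
  rw [mem_smul_set_iff_inv_smul_mem₀ hc.ne']
  exact forall_congr' fun i => mul_pos_iff_of_pos_left (inv_pos.2 hc)

lemma append_mem_posOrthant {r m : ℕ} {y : Fin r → ℝ} {u : Fin m → ℝ}
    (hy : y ∈ posOrthant r) (hu : u ∈ posOrthant m) : Fin.append y u ∈ posOrthant (r + m) :=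
  Fin.addCases (fun i => by simpa using hy i) (fun j => by simpa using hu j)

lemma sum_nonneg_of_mem_posOrthant {m : ℕ} {w : Fin m → ℝ} (hw : w ∈ posOrthant m) :
    0 ≤ ∑ j, w j :=
  Finset.sum_nonneg fun j _ => (hw j).le

lemma sum_pos_of_mem_posOrthant {m : ℕ} {w : Fin m → ℝ} (hw : w ∈ posOrthant m) (hm : m ≠ 0) :
    0 < ∑ j, w j :=
  Finset.sum_pos (fun j _ => hw j) (Finset.univ_nonempty_iff.2 ⟨⟨0, Nat.pos_of_ne_zero hm⟩⟩)

lemma sum_append {r m : ℕ} (y : Fin r → ℝ) (u : Fin m → ℝ) :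
    ∑ i, Fin.append y u i = ∑ i, y i + ∑ j, u j := by
  simp [Fin.sum_univ_add]

lemma measurable_append (r m : ℕ) :
    Measurable fun p : (Fin r → ℝ) × (Fin m → ℝ) => Fin.append p.1 p.2 :=
  (Fin.appendIsometry r m).continuous.measurable

lemma append_smul {k m : ℕ} (c : ℝ) (y : Fin k → ℝ) (u : Fin m → ℝ) :
    Fin.append (c • y) (c • u) = c • Fin.append y u := by
  ext i; refine Fin.addCases (fun j => ?_) (fun j => ?_) i <;> simp

lemma volume_restrict_posOrthant (n : ℕ) :
    volume.restrict (posOrthant n) = Measure.pi fun _ => volume.restrict (Ioi (0 : ℝ)) := by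
  rw [posOrthant_eq_pi, volume_pi, Measure.restrict_pi_pi]

lemma volume_fin_zero : (volume : Measure (Fin 0 → ℝ)) = Measure.dirac Fin.elim0 := by
  rw [volume_pi, Measure.pi_of_empty (x := Fin.elim0)]

lemma integrableOn_posOrthant_prod {n : ℕ} {h : Fin n → ℝ → ℝ}
    (hh : ∀ i, IntegrableOn (h i) (Ioi 0)) :
    IntegrableOn (fun y => ∏ i, h i (y i)) (posOrthant n) := by
  rw [IntegrableOn, volume_restrict_posOrthant]
  exact .fin_nat_prod hh

lemma integral_posOrthant_prod {n : ℕ} (h : Fin n → ℝ → ℝ) :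
    ∫ y in posOrthant n, ∏ i, h i (y i) = ∏ i, ∫ t in Ioi 0, h i t := by
  rw [volume_restrict_posOrthant, integral_fin_nat_prod_eq_prod]

lemma integrableOn_Ioc_add_rpow {c p : ℝ} (hc : 0 ≤ c) (hcp : 0 < c ∨ -1 < p) :
    IntegrableOn (fun t => (c + t) ^ p) (Ioc 0 1) := by
  rcases hc.eq_or_lt with rfl | hc
  · simpa using (intervalIntegral.intervalIntegrable_rpow' (hcp.resolve_left (lt_irrefl 0))).1
  · refine (ContinuousOn.integrableOn_Icc fun t ht => ?_).mono_set Ioc_subset_Icc_self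
    exact ((continuousAt_id.const_add c).rpow_const
      (.inl (add_pos_of_pos_of_nonneg hc ht.1).ne')).continuousWithinAt

lemma integrableOn_Ioc_add_rpow_mul_add_rpow {c d p q : ℝ} (hc : 0 < c) (hd : 0 ≤ d)
    (hp : p ≤ 0) (hdq : 0 < d ∨ -1 < q) :
    IntegrableOn (fun t => (c + t) ^ p * (d + t) ^ q) (Ioc 0 1) := by
  refine (integrableOn_Ioc_add_rpow hd hdq).bdd_mul (c := c ^ p)
    (by fun_prop : Measurable fun t : ℝ => (c + t) ^ p).aestronglyMeasurable ?_
  refine (ae_restrict_iff' measurableSet_Ioc).2 (.of_forall fun t ht => ?_)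
  rw [norm_of_nonneg (by have := ht.1; positivity)]
  exact rpow_le_rpow_of_nonpos hc (by linarith [ht.1]) hp

lemma integrableOn_Ioi_add_rpow_mul_add_rpow {c d p q : ℝ} (hc : 0 ≤ c) (hd : 0 ≤ d)
    (hp : p ≤ 0) (hq : q ≤ 0) (hpq : p + q < -1) (hcd : 0 < c ∨ 0 < d)
    (hcp : 0 < c ∨ -1 < p) (hdq : 0 < d ∨ -1 < q) :
    IntegrableOn (fun t => (c + t) ^ p * (d + t) ^ q) (Ioi 0) := by
  rw [← Ioc_union_Ioi_eq_Ioi zero_le_one]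
  refine .union ?_ ?_
  · rcases hcd with hc | hd
    · exact integrableOn_Ioc_add_rpow_mul_add_rpow hc hd hp hdq
    · simpa only [mul_comm] using integrableOn_Ioc_add_rpow_mul_add_rpow hd hc hq hcp
  · refine (integrableOn_Ioi_rpow_of_lt hpq one_pos).mono' (by fun_prop)
      ((ae_restrict_iff' measurableSet_Ioi).2 (.of_forall fun t ht => ?_))
    have ht : (0 : ℝ) < t := one_pos.trans ht
    rw [norm_of_nonneg (by positivity), rpow_add ht]
    exact mul_le_mul (rpow_le_rpow_of_nonpos ht (by linarith) hp)
      (rpow_le_rpow_of_nonpos ht (by linarith) hq) (by positivity) (by positivity)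

lemma integral_add_rpow_mul_rpow {a : ℝ} (ha : 0 < a) (p ν : ℝ) :
    ∫ t in Ioi 0, (a + t) ^ p * t ^ ν = a ^ (p + ν + 1) * ∫ s in Ioi 0, (1 + s) ^ p * s ^ ν := by
  have h := integral_comp_mul_left_Ioi' (fun t => (a + t) ^ p * t ^ ν) 0 ha
  rw [mul_zero] at h
  rw [← h, ← integral_const_mul, smul_eq_mul, ← integral_const_mul]
  refine setIntegral_congr_fun measurableSet_Ioi fun s hs => ?_
  have hs : (0 : ℝ) < s := hs
  rw [show a + a * s = a * (1 + s) by ring, mul_rpow ha.le (by positivity), mul_rpow ha.le hs.le,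
    rpow_add_one ha.ne', rpow_add ha]
  ring

lemma add_rpow_le_rpow_mul_rpow {b t q ν : ℝ} (hb : 0 ≤ b) (ht : 0 < t) (hqν : q ≤ ν)
    (hν : ν ≤ 0) (hside : 0 < b ∨ q = ν) :
    (b + t) ^ q ≤ b ^ (q - ν) * t ^ ν := by
  rcases hside with hb | rfl
  · rw [← sub_add_cancel q ν, rpow_add (by positivity), add_sub_cancel_right]
    exact mul_le_mul (rpow_le_rpow_of_nonpos hb (by linarith) (by linarith))
      (rpow_le_rpow_of_nonpos ht (by linarith) hν) (by positivity) (by positivity)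
  · rw [sub_self, rpow_zero, one_mul]
    exact rpow_le_rpow_of_nonpos ht (by linarith) hν

lemma integral_add_rpow_mul_add_rpow_le {a b p q ν : ℝ} (ha : 0 < a) (hb : 0 ≤ b) (hp : p ≤ 0)
    (hν : ν ∈ Ioc (-1 : ℝ) 0) (hqν : q ≤ ν) (hpν : p + ν < -1) (hside : 0 < b ∨ q = ν) :
    ∫ t in Ioi 0, (a + t) ^ p * (b + t) ^ q
      ≤ b ^ (q - ν) * (a ^ (p + ν + 1) * ∫ s in Ioi 0, (1 + s) ^ p * s ^ ν) := by
  have hint : IntegrableOn (fun t => (a + t) ^ p * t ^ ν) (Ioi 0) := by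
    simpa using integrableOn_Ioi_add_rpow_mul_add_rpow ha.le le_rfl hp hν.2 hpν (.inl ha)
      (.inl ha) (.inr hν.1)
  have hint' : IntegrableOn (fun t => (a + t) ^ p * (b + t) ^ q) (Ioi 0) := by
    refine integrableOn_Ioi_add_rpow_mul_add_rpow ha.le hb hp (hqν.trans hν.2) (by linarith)
      (.inl ha) (.inl ha) ?_
    rcases hside with hb | rfl
    exacts [.inl hb, .inr hν.1]
  rw [← integral_add_rpow_mul_rpow ha, ← integral_const_mul]
  refine setIntegral_mono_on hint' (hint.const_mul _) measurableSet_Ioi fun t ht => ?_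
  rw [mul_left_comm]
  exact mul_le_mul_of_nonneg_left (add_rpow_le_rpow_mul_rpow hb ht hqν hν.2 hside)
    (by have : (0:ℝ) < t := ht; positivity)

lemma rpow_le_prod_rpow {n : ℕ} {S s : ℝ} {v : Fin n → ℝ} (hv : v ∈ posOrthant n)
    (hvS : ∀ j, v j ≤ S) (hs : s ≤ 0) :
    S ^ (n * s) ≤ ∏ j, v j ^ s := by
  rcases n.eq_zero_or_pos with rfl | hn
  · simp
  have hS : 0 < S := (hv ⟨0, hn⟩).trans_le (hvS _)
  rw [mul_comm, rpow_mul_natCast hS.le, ← Fin.prod_const]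
  exact Finset.prod_le_prod (fun j _ => by positivity)
    fun j _ => rpow_le_rpow_of_nonpos (hv j) (hvS j) hs

lemma sum_rpow_mul_rpow_le_prod {m : ℕ} {s : ℝ} (hs : s ≤ 0) {w : Fin m → ℝ}
    (hw : w ∈ posOrthant m) :
    (m + ∑ j, w j) ^ (m * s) * (∑ j, w j) ^ (m * s) ≤ ∏ j, (1 + w j) ^ s * w j ^ s := by
  have hle : ∀ j, w j ≤ ∑ j, w j :=
    fun j => Finset.single_le_sum (fun i _ => (hw i).le) (Finset.mem_univ j)
  have hsum := sum_nonneg_of_mem_posOrthant hw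
  rw [Finset.prod_mul_distrib]
  refine mul_le_mul (rpow_le_prod_rpow (fun j => by have := hw j; positivity) (fun j => ?_) hs)
    (rpow_le_prod_rpow hw hle hs) (by positivity)
    (Finset.prod_nonneg fun j _ => by have := hw j; positivity)
  have : (1 : ℝ) ≤ m := Nat.one_le_cast.2 j.pos
  linarith [hle j]

lemma div_mem_Ioo_neg_one_neg_half {e m : ℝ} (hm : 0 < m) (h₁ : -m < e) (h₂ : e < -m / 2) :
    e / m ∈ Ioo (-1) (-1 / 2) :=
  ⟨by rw [lt_div_iff₀ hm]; linarith, by rw [div_lt_iff₀ hm]; linarith⟩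

lemma exists_rpow_sum_le_rpow_sum {m : ℕ} {α : ℝ} (hα : -((m : ℝ) + 1) / 2 < α)
    (hα' : α < -(m : ℝ) / 2) :
    ∃ s ∈ Ioo (-1 : ℝ) (-1 / 2), ∀ w ∈ posOrthant m, (∑ j, w j) ^ α ≤ (∑ j, w j) ^ (m * s) := by
  rcases eq_or_ne m 0 with rfl | hm
  · -- the empty sum is `0`, and Lean's `0 ^ α` is `0` for `α ≠ 0`
    refine ⟨-3 / 4, by norm_num, fun w _ => ?_⟩
    simp only [Finset.univ_eq_empty, Finset.sum_empty, CharP.cast_eq_zero, zero_mul, rpow_zero]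
    rw [zero_rpow (by push_cast at hα'; linarith)]
    exact zero_le_one
  · have hm' : (1 : ℝ) ≤ m := Nat.one_le_cast.2 (Nat.pos_of_ne_zero hm)
    refine ⟨α / m, div_mem_Ioo_neg_one_neg_half (by linarith) (by linarith) hα', fun w _ => ?_⟩
    rw [mul_div_cancel₀ _ (by positivity)]

/-- `α₂ - m₂ s₂ = r ν`, where `ν` is the exponent traded in `(B + t)^{α₂/r} ≤ B^{α₂/r-ν} t^ν`. -/
lemma exists_block_exponents {r m₁ m₂ : ℕ} {α₁ α₂ : ℝ} (hr : r ≠ 0) (hm₁ : m₁ ≠ 0)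
    (hα₁ : α₁ < -(r + m₁ : ℝ) / 2)
    (hα₂ : -((r + m₂ : ℝ) + 1) / 2 < α₂) (hα₂' : α₂ < -(r + m₂ : ℝ) / 2)
    (hsum : -((r + m₁ : ℝ) + (r + m₂) + 1) / 2 < α₁ + α₂) :
    ∃ s₁ s₂ : ℝ, s₁ ∈ Ioo (-1) (-1 / 2) ∧ s₂ ∈ Ioo (-1) (-1 / 2) ∧
      m₁ * s₁ + m₂ * s₂ = α₁ + α₂ + r ∧ α₂ - m₂ * s₂ ∈ Ioc (-(r : ℝ)) 0 := by
  have hr' : (1 : ℝ) ≤ r := Nat.one_le_cast.2 (Nat.pos_of_ne_zero hr)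
  have hm₁' : (1 : ℝ) ≤ m₁ := Nat.one_le_cast.2 (Nat.pos_of_ne_zero hm₁)
  rcases eq_or_ne m₂ 0 with rfl | hm₂
  · simp only [CharP.cast_eq_zero, add_zero, zero_mul, sub_zero] at hα₂ hα₂' hsum ⊢
    refine ⟨(α₁ + α₂ + r) / m₁, -3 / 4, div_mem_Ioo_neg_one_neg_half (by linarith) (by linarith)
      (by linarith), by norm_num, by field_simp, ⟨by linarith, by linarith⟩⟩
  have hm₂' : (1 : ℝ) ≤ m₂ := Nat.one_le_cast.2 (Nat.pos_of_ne_zero hm₂)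
  obtain ⟨lam, hlo, hhi⟩ := exists_between (show max (max (-(r : ℝ)) (α₂ + m₂ / 2)) (-α₁ - r - m₁)
      < min (min 0 (-α₁ - r - m₁ / 2)) (α₂ + m₂) by
    simp only [max_lt_iff, lt_min_iff]; and_intros <;> linarith)
  simp only [max_lt_iff, lt_min_iff] at hlo hhi
  refine ⟨(α₁ + lam + r) / m₁, (α₂ - lam) / m₂, div_mem_Ioo_neg_one_neg_half (by linarith)
    (by linarith) (by linarith), div_mem_Ioo_neg_one_neg_half (by linarith) (by linarith)
    (by linarith), ?_, ?_, ?_⟩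
  · field_simp; ring
  · rw [mul_div_cancel₀ _ (by positivity)]; linarith
  · rw [mul_div_cancel₀ _ (by positivity)]; linarith

lemma abs_mul_comp_one_add_append_le {m₁ m₂ : ℕ} {F : (Fin (m₁ + m₂) → ℝ) → ℝ}
    {C s₁ s₂ : ℝ} (hs₁ : s₁ ≤ 0) (hs₂ : s₂ ≤ 0)
    (hbd : ∀ u ∈ posOrthant m₁, ∀ v ∈ posOrthant m₂,
      |F (Fin.append u v)| ≤ C * ((∑ j, u j) ^ (m₁ * s₁) * (∑ j, v j) ^ (m₂ * s₂)))
    {u : Fin m₁ → ℝ} {v : Fin m₂ → ℝ} (hu : u ∈ posOrthant m₁) (hv : v ∈ posOrthant m₂) :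
    |F (Fin.append (1 + u) (1 + v)) * F (Fin.append u v)|
      ≤ C * C * ((∏ j, (1 + u j) ^ s₁ * u j ^ s₁) * ∏ j, (1 + v j) ^ s₂ * v j ^ s₂) := by
  have hsum : ∀ {m : ℕ} (w : Fin m → ℝ), ∑ j, (1 + w) j = m + ∑ j, w j := by
    intro m w; simp [Finset.sum_add_distrib]
  have hbd1 := hbd (1 + u) (fun j => add_pos one_pos (hu j)) (1 + v)
    (fun j => add_pos one_pos (hv j))
  rw [hsum, hsum] at hbd1
  have hu0 := sum_nonneg_of_mem_posOrthant hu
  have hv0 := sum_nonneg_of_mem_posOrthant hv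
  calc |F (Fin.append (1 + u) (1 + v)) * F (Fin.append u v)|
      ≤ (C * ((m₁ + ∑ j, u j) ^ (m₁ * s₁) * (m₂ + ∑ j, v j) ^ (m₂ * s₂))) *
          (C * ((∑ j, u j) ^ (m₁ * s₁) * (∑ j, v j) ^ (m₂ * s₂))) := by
        rw [abs_mul]
        exact mul_le_mul hbd1 (hbd u hu v hv) (abs_nonneg _) ((abs_nonneg _).trans hbd1)
    _ = C * C * (((m₁ + ∑ j, u j) ^ (m₁ * s₁) * (∑ j, u j) ^ (m₁ * s₁)) *
          ((m₂ + ∑ j, v j) ^ (m₂ * s₂) * (∑ j, v j) ^ (m₂ * s₂))) := by ring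
    _ ≤ _ := by
        refine mul_le_mul_of_nonneg_left (mul_le_mul (sum_rpow_mul_rpow_le_prod hs₁ hu)
          (sum_rpow_mul_rpow_le_prod hs₂ hv) (by positivity)
          (Finset.prod_nonneg fun j _ => by have := hu j; positivity)) (mul_self_nonneg C)

lemma integrableOn_mul_comp_one_add_of_abs_le {m₁ m₂ : ℕ} {F : (Fin (m₁ + m₂) → ℝ) → ℝ}
    (hF : Measurable F) {C s₁ s₂ : ℝ} (hs₁ : s₁ ∈ Ioo (-1) (-1 / 2))
    (hs₂ : s₂ ∈ Ioo (-1) (-1 / 2))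
    (hbd : ∀ u ∈ posOrthant m₁, ∀ v ∈ posOrthant m₂,
      |F (Fin.append u v)| ≤ C * ((∑ j, u j) ^ (m₁ * s₁) * (∑ j, v j) ^ (m₂ * s₂))) :
    IntegrableOn (fun x => F (fun i => 1 + x i) * F x) (posOrthant (m₁ + m₂)) := by
  set σ : Fin (m₁ + m₂) → ℝ := Fin.append (fun _ => s₁) (fun _ => s₂)
  have hint : ∀ i, IntegrableOn (fun t : ℝ => (1 + t) ^ σ i * t ^ σ i) (Ioi 0) := by
    intro i
    have hσ : σ i ∈ Ioo (-1) (-1 / 2) :=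
      Fin.addCases (fun j => by simpa [σ] using hs₁) (fun j => by simpa [σ] using hs₂) i
    simpa using integrableOn_Ioi_add_rpow_mul_add_rpow zero_le_one le_rfl
      (by linarith [hσ.2]) (by linarith [hσ.2]) (by linarith [hσ.2]) (.inl one_pos)
      (.inl one_pos) (.inr hσ.1)
  refine ((integrableOn_posOrthant_prod hint).const_mul (C * C)).mono' (by fun_prop) ?_
  refine (ae_restrict_iff' (measurableSet_posOrthant _)).2 (.of_forall fun x hx => ?_)
  obtain ⟨u, v, rfl⟩ : ∃ u v, x = Fin.append u v := ⟨_, _, Fin.append_castAdd_natAdd.symm⟩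
  have hshift : (fun i => 1 + Fin.append u v i) = Fin.append (1 + u) (1 + v) := by
    ext i; refine Fin.addCases (fun j => ?_) (fun j => ?_) i <;> simp
  rw [hshift, Real.norm_eq_abs, Fin.prod_univ_add]
  simpa only [σ, Fin.append_left, Fin.append_right] using
    abs_mul_comp_one_add_append_le (hs₁.2.le.trans (by norm_num)) (hs₂.2.le.trans (by norm_num))
      hbd (fun j => by simpa using hx (Fin.castAdd m₂ j))
      (fun j => by simpa using hx (Fin.natAdd m₁ j))

lemma contract_append {r m₁ m₂ : ℕ} (g1 : (Fin (r + m₁) → ℝ) → ℝ) (g2 : (Fin (r + m₂) → ℝ) → ℝ)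
    (u : Fin m₁ → ℝ) (v : Fin m₂ → ℝ) :
    contract r m₁ m₂ g1 g2 (Fin.append u v)
      = ∫ y in posOrthant r, g1 (Fin.append y u) * g2 (Fin.append y v) := by
  simp only [contract, Fin.append_left, Fin.append_right]

lemma contract_zero_append {m₁ m₂ : ℕ} (g1 : (Fin (0 + m₁) → ℝ) → ℝ)
    (g2 : (Fin (0 + m₂) → ℝ) → ℝ) (u : Fin m₁ → ℝ) (v : Fin m₂ → ℝ) :
    contract 0 m₁ m₂ g1 g2 (Fin.append u v)
      = g1 (Fin.append Fin.elim0 u) * g2 (Fin.append Fin.elim0 v) := by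
  rw [contract_append, posOrthant_zero, Measure.restrict_univ, volume_fin_zero, integral_dirac]

section Contraction

variable {r m₁ m₂ : ℕ} {α₁ α₂ c₁ c₂ : ℝ}
  {g1 : (Fin (r + m₁) → ℝ) → ℝ} {g2 : (Fin (r + m₂) → ℝ) → ℝ}
  {y : Fin r → ℝ} {u : Fin m₁ → ℝ} {v : Fin m₂ → ℝ}

lemma contract_append_comm :
    contract r m₁ m₂ g1 g2 (Fin.append u v) = contract r m₂ m₁ g2 g1 (Fin.append v u) := by
  simp only [contract_append, mul_comm]

lemma measurable_contract (hg1 : Measurable g1) (hg2 : Measurable g2) :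
    Measurable (contract r m₁ m₂ g1 g2) := by
  have happ : ∀ {k : ℕ} (f : Fin k → Fin (m₁ + m₂)),
      Measurable fun p : (Fin (m₁ + m₂) → ℝ) × (Fin r → ℝ) => Fin.append p.2 fun j => p.1 (f j) :=
    fun f => (measurable_append r _).comp (measurable_snd.prodMk
      (measurable_pi_lambda _ fun j => (measurable_pi_apply _).comp measurable_fst))
  have h : StronglyMeasurable (Function.uncurry fun (x : Fin (m₁ + m₂) → ℝ) (y : Fin r → ℝ) =>
      g1 (Fin.append y fun j => x (Fin.castAdd m₂ j)) *
        g2 (Fin.append y fun j => x (Fin.natAdd m₁ j))) :=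
    ((hg1.comp (happ _)).mul (hg2.comp (happ _))).stronglyMeasurable
  exact (h.integral_prod_right' (ν := volume.restrict (posOrthant r))).measurable

lemma contract_smul
    (hh1 : ∀ lam : ℝ, 0 < lam → ∀ z ∈ posOrthant (r + m₁),
      g1 (fun i => lam * z i) = lam ^ α₁ * g1 z)
    (hh2 : ∀ lam : ℝ, 0 < lam → ∀ z ∈ posOrthant (r + m₂),
      g2 (fun i => lam * z i) = lam ^ α₂ * g2 z)
    {lam : ℝ} (hlam : 0 < lam) {x : Fin (m₁ + m₂) → ℝ} (hx : x ∈ posOrthant (m₁ + m₂)) :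
    contract r m₁ m₂ g1 g2 (fun i => lam * x i)
      = lam ^ (α₁ + α₂ + r) * contract r m₁ m₂ g1 g2 x := by
  obtain ⟨u, v, rfl⟩ : ∃ u v, x = Fin.append u v := ⟨_, _, Fin.append_castAdd_natAdd.symm⟩
  have hu : u ∈ posOrthant m₁ := fun j => by simpa using hx (Fin.castAdd m₂ j)
  have hv : v ∈ posOrthant m₂ := fun j => by simpa using hx (Fin.natAdd m₁ j)
  have hscale : ∫ y in posOrthant r, g1 (Fin.append (lam • y) (lam • u)) *
        g2 (Fin.append (lam • y) (lam • v))
      = lam ^ (α₁ + α₂) * contract r m₁ m₂ g1 g2 (Fin.append u v) := by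
    rw [contract_append, ← integral_const_mul]
    refine setIntegral_congr_fun (measurableSet_posOrthant r) fun y hy => ?_
    simp only [append_smul]
    rw [show g1 (lam • Fin.append y u) = _ from hh1 lam hlam _ (append_mem_posOrthant hy hu),
      show g2 (lam • Fin.append y v) = _ from hh2 lam hlam _ (append_mem_posOrthant hy hv),
      rpow_add hlam]
    ring
  have hcov := Measure.setIntegral_comp_smul_of_pos volume
    (fun y => g1 (Fin.append y (lam • u)) * g2 (Fin.append y (lam • v))) (posOrthant r) hlam
  rw [hscale, smul_posOrthant hlam, Module.finrank_fin_fun, smul_eq_mul] at hcov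
  rw [eq_inv_mul_iff_mul_eq₀ (by positivity)] at hcov
  rw [show (fun i => lam * Fin.append u v i) = Fin.append (lam • u) (lam • v) from
    (append_smul lam u v).symm, contract_append, ← hcov, rpow_add hlam (α₁ + α₂), rpow_natCast]
  ring

lemma abs_mul_append_le
    (hb1 : ∀ z ∈ posOrthant (r + m₁), |g1 z| ≤ c₁ * (∑ i, z i) ^ α₁)
    (hb2 : ∀ z ∈ posOrthant (r + m₂), |g2 z| ≤ c₂ * (∑ i, z i) ^ α₂)
    (hy : y ∈ posOrthant r) (hu : u ∈ posOrthant m₁) (hv : v ∈ posOrthant m₂) :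
    |g1 (Fin.append y u) * g2 (Fin.append y v)|
      ≤ c₁ * c₂ * ((∑ i, y i + ∑ j, u j) ^ α₁ * (∑ i, y i + ∑ j, v j) ^ α₂) := by
  have h1 := hb1 _ (append_mem_posOrthant hy hu)
  have h2 := hb2 _ (append_mem_posOrthant hy hv)
  rw [sum_append] at h1 h2
  rw [abs_mul, mul_mul_mul_comm]
  exact mul_le_mul h1 h2 (abs_nonneg _) ((abs_nonneg _).trans h1)

lemma abs_mul_append_le_prod (hr : r ≠ 0) (hα₁ : α₁ ≤ 0) (hα₂ : α₂ ≤ 0)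
    (hc₁ : 0 ≤ c₁) (hc₂ : 0 ≤ c₂)
    (hb1 : ∀ z ∈ posOrthant (r + m₁), |g1 z| ≤ c₁ * (∑ i, z i) ^ α₁)
    (hb2 : ∀ z ∈ posOrthant (r + m₂), |g2 z| ≤ c₂ * (∑ i, z i) ^ α₂)
    (hy : y ∈ posOrthant r) (hu : u ∈ posOrthant m₁) (hv : v ∈ posOrthant m₂) :
    |g1 (Fin.append y u) * g2 (Fin.append y v)|
      ≤ c₁ * c₂ * ∏ i, (∑ j, u j + y i) ^ (α₁ / r) * (∑ j, v j + y i) ^ (α₂ / r) := by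
  have hu0 := sum_nonneg_of_mem_posOrthant hu
  have hv0 := sum_nonneg_of_mem_posOrthant hv
  have hy0 := sum_nonneg_of_mem_posOrthant hy
  have hsplit : ∀ {a α : ℝ}, 0 ≤ a → α ≤ 0 → (∑ i, y i + a) ^ α ≤ ∏ i, (a + y i) ^ (α / r) := by
    intro a α ha hα
    have := rpow_le_prod_rpow (S := ∑ i, y i + a) (v := fun i => a + y i)
      (fun i => by have := hy i; positivity)
      (fun i => by linarith [Finset.single_le_sum (fun i _ => (hy i).le) (Finset.mem_univ i)])
      (div_nonpos_of_nonpos_of_nonneg hα r.cast_nonneg)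
    rwa [mul_div_cancel₀ _ (Nat.cast_ne_zero.2 hr)] at this
  refine (abs_mul_append_le hb1 hb2 hy hu hv).trans
    (mul_le_mul_of_nonneg_left ?_ (mul_nonneg hc₁ hc₂))
  rw [Finset.prod_mul_distrib]
  exact mul_le_mul (hsplit hu0 hα₁) (hsplit hv0 hα₂) (by positivity)
    (Finset.prod_nonneg fun i _ => by have := hy i; positivity)

lemma integrableOn_mul_append (hr : r ≠ 0) (hα₁ : α₁ ≤ 0) (hα₂ : α₂ ≤ 0)
    (hc₁ : 0 ≤ c₁) (hc₂ : 0 ≤ c₂) (hg1 : Measurable g1) (hg2 : Measurable g2)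
    (hb1 : ∀ z ∈ posOrthant (r + m₁), |g1 z| ≤ c₁ * (∑ i, z i) ^ α₁)
    (hb2 : ∀ z ∈ posOrthant (r + m₂), |g2 z| ≤ c₂ * (∑ i, z i) ^ α₂)
    (hu : u ∈ posOrthant m₁) (hv : v ∈ posOrthant m₂)
    (hint : IntegrableOn (fun t => (∑ j, u j + t) ^ (α₁ / r) * (∑ j, v j + t) ^ (α₂ / r))
      (Ioi 0)) :
    IntegrableOn (fun y => g1 (Fin.append y u) * g2 (Fin.append y v)) (posOrthant r) := by
  have happ : ∀ {m : ℕ} (w : Fin m → ℝ), Measurable fun y : Fin r → ℝ => Fin.append y w :=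
    fun w => (measurable_append _ _).comp (measurable_id.prodMk measurable_const)
  refine ((integrableOn_posOrthant_prod fun _ => hint).const_mul (c₁ * c₂)).mono'
    ((hg1.comp (happ u)).mul (hg2.comp (happ v))).aestronglyMeasurable
    ((ae_restrict_iff' (measurableSet_posOrthant r)).2 (.of_forall fun y hy => ?_))
  exact abs_mul_append_le_prod hr hα₁ hα₂ hc₁ hc₂ hb1 hb2 hy hu hv

lemma integrableOn_contract_integrand (hc₁ : 0 ≤ c₁) (hc₂ : 0 ≤ c₂)
    (hg1 : Measurable g1) (hg2 : Measurable g2)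
    (hb1 : ∀ z ∈ posOrthant (r + m₁), |g1 z| ≤ c₁ * (∑ i, z i) ^ α₁)
    (hb2 : ∀ z ∈ posOrthant (r + m₂), |g2 z| ≤ c₂ * (∑ i, z i) ^ α₂)
    (hα₁ : -((r + m₁ : ℝ) + 1) / 2 < α₁) (hα₁' : α₁ < -(r + m₁ : ℝ) / 2)
    (hα₂ : -((r + m₂ : ℝ) + 1) / 2 < α₂) (hα₂' : α₂ < -(r + m₂ : ℝ) / 2)
    (hm : m₁ ≠ 0 ∨ m₂ ≠ 0) (hu : u ∈ posOrthant m₁) (hv : v ∈ posOrthant m₂) :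
    IntegrableOn (fun y => g1 (Fin.append y u) * g2 (Fin.append y v)) (posOrthant r) := by
  rcases eq_or_ne r 0 with rfl | hr
  · rw [posOrthant_zero, integrableOn_univ, volume_fin_zero]
    exact .of_finite
  have hr' : (1 : ℝ) ≤ r := Nat.one_le_cast.2 (Nat.pos_of_ne_zero hr)
  have hr'' : (0 : ℝ) ≤ r := r.cast_nonneg
  have hexp : ∀ {m : ℕ} {α : ℝ} {w : Fin m → ℝ}, w ∈ posOrthant m →
      -((r + m : ℝ) + 1) / 2 < α → 0 < ∑ j, w j ∨ -1 < α / r := by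
    intro m α w hw hα
    rcases eq_or_ne m 0 with rfl | hm
    · right; rw [lt_div_iff₀ (by positivity)]; push_cast at hα; linarith
    · exact .inl (sum_pos_of_mem_posOrthant hw hm)
  have hm' : 0 < ∑ j, u j ∨ 0 < ∑ j, v j :=
    hm.imp (sum_pos_of_mem_posOrthant hu) (sum_pos_of_mem_posOrthant hv)
  have hm₁ : (0 : ℝ) ≤ m₁ := m₁.cast_nonneg
  have hm₂ : (0 : ℝ) ≤ m₂ := m₂.cast_nonneg
  have hpq : α₁ / r + α₂ / r < -1 := by rw [← add_div, div_lt_iff₀ (by positivity)]; linarith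
  refine integrableOn_mul_append hr (by linarith) (by linarith) hc₁ hc₂ hg1 hg2 hb1 hb2 hu hv
    (integrableOn_Ioi_add_rpow_mul_add_rpow (sum_nonneg_of_mem_posOrthant hu)
      (sum_nonneg_of_mem_posOrthant hv) (div_nonpos_of_nonpos_of_nonneg (by linarith) hr'')
      (div_nonpos_of_nonpos_of_nonneg (by linarith) hr'') hpq hm' (hexp hu hα₁) (hexp hv hα₂))

lemma abs_contract_append_le (hr : r ≠ 0) (hα₁ : α₁ ≤ 0) (hα₂ : α₂ ≤ 0)
    (hc₁ : 0 ≤ c₁) (hc₂ : 0 ≤ c₂)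
    (hb1 : ∀ z ∈ posOrthant (r + m₁), |g1 z| ≤ c₁ * (∑ i, z i) ^ α₁)
    (hb2 : ∀ z ∈ posOrthant (r + m₂), |g2 z| ≤ c₂ * (∑ i, z i) ^ α₂)
    (hu : u ∈ posOrthant m₁) (hv : v ∈ posOrthant m₂)
    (hint : IntegrableOn (fun t => (∑ j, u j + t) ^ (α₁ / r) * (∑ j, v j + t) ^ (α₂ / r))
      (Ioi 0)) :
    |contract r m₁ m₂ g1 g2 (Fin.append u v)|
      ≤ c₁ * c₂ * (∫ t in Ioi 0, (∑ j, u j + t) ^ (α₁ / r) * (∑ j, v j + t) ^ (α₂ / r)) ^ r := by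
  rw [contract_append, ← Fin.prod_const, ← integral_posOrthant_prod, ← integral_const_mul]
  exact norm_integral_le_of_norm_le (f := fun y => g1 (Fin.append y u) * g2 (Fin.append y v))
    ((integrableOn_posOrthant_prod fun _ => hint).const_mul _)
    ((ae_restrict_iff' (measurableSet_posOrthant r)).2 (.of_forall fun y hy =>
      abs_mul_append_le_prod hr hα₁ hα₂ hc₁ hc₂ hb1 hb2 hy hu hv))

lemma abs_contract_append_le_of_exponents (hr : r ≠ 0) (hm₁ : m₁ ≠ 0)
    (hc₁ : 0 ≤ c₁) (hc₂ : 0 ≤ c₂)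
    (hb1 : ∀ z ∈ posOrthant (r + m₁), |g1 z| ≤ c₁ * (∑ i, z i) ^ α₁)
    (hb2 : ∀ z ∈ posOrthant (r + m₂), |g2 z| ≤ c₂ * (∑ i, z i) ^ α₂)
    {s₁ s₂ : ℝ} (hs₁ : s₁ < 0) (hs₂ : s₂ ≤ 0) (hs : m₁ * s₁ + m₂ * s₂ = α₁ + α₂ + r)
    (hν : α₂ - m₂ * s₂ ∈ Ioc (-(r : ℝ)) 0) :
    ∃ C, ∀ u ∈ posOrthant m₁, ∀ v ∈ posOrthant m₂, |contract r m₁ m₂ g1 g2 (Fin.append u v)|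
      ≤ C * ((∑ j, u j) ^ (m₁ * s₁) * (∑ j, v j) ^ (m₂ * s₂)) := by
  have hr' : (0 : ℝ) < r := Nat.cast_pos.2 (Nat.pos_of_ne_zero hr)
  have hm₂s₂ : m₂ * s₂ ≤ 0 := mul_nonpos_of_nonneg_of_nonpos m₂.cast_nonneg hs₂
  have hm₁s₁ : m₁ * s₁ < 0 := mul_neg_of_pos_of_neg (Nat.cast_pos.2 (Nat.pos_of_ne_zero hm₁)) hs₁
  have hα₁ : α₁ ≤ 0 := by linarith [hν.1]
  set ν := (α₂ - m₂ * s₂) / r with hν_def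
  have hν' : ν ∈ Ioc (-1) 0 := ⟨by rw [lt_div_iff₀ hr']; linarith [hν.1],
    div_nonpos_of_nonpos_of_nonneg hν.2 hr'.le⟩
  have hp : α₁ / r ≤ 0 := div_nonpos_of_nonpos_of_nonneg hα₁ hr'.le
  have hqν : α₂ / r ≤ ν := div_le_div_of_nonneg_right (by linarith) hr'.le
  have hpν : α₁ / r + ν < -1 := by rw [← add_div, div_lt_iff₀ hr']; linarith
  refine ⟨c₁ * c₂ * (∫ s in Ioi 0, (1 + s) ^ (α₁ / r) * s ^ ν) ^ r, fun u hu v hv => ?_⟩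
  have hA := sum_pos_of_mem_posOrthant hu hm₁
  have hB := sum_nonneg_of_mem_posOrthant hv
  have hside : 0 < ∑ j, v j ∨ α₂ / r = ν := by
    rcases eq_or_ne m₂ 0 with rfl | hm₂
    · right; simp [hν_def]
    · exact .inl (sum_pos_of_mem_posOrthant hv hm₂)
  have hint := integrableOn_Ioi_add_rpow_mul_add_rpow hA.le hB hp (hqν.trans hν'.2)
    (by linarith) (.inl hA) (.inl hA) (hside.imp_right fun h : α₂ / r = ν => h ▸ hν'.1)
  have hJ0 : 0 ≤ ∫ t in Ioi 0, (∑ j, u j + t) ^ (α₁ / r) * (∑ j, v j + t) ^ (α₂ / r) :=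
    setIntegral_nonneg measurableSet_Ioi fun t (ht : 0 < t) => by positivity
  calc |contract r m₁ m₂ g1 g2 (Fin.append u v)|
      ≤ c₁ * c₂ * (∫ t in Ioi 0, (∑ j, u j + t) ^ (α₁ / r) * (∑ j, v j + t) ^ (α₂ / r)) ^ r :=
        abs_contract_append_le hr hα₁ (by linarith [hν.2]) hc₁ hc₂ hb1 hb2 hu hv hint
    _ ≤ c₁ * c₂ * ((∑ j, v j) ^ (α₂ / r - ν) *
          ((∑ j, u j) ^ (α₁ / r + ν + 1) * ∫ s in Ioi 0, (1 + s) ^ (α₁ / r) * s ^ ν)) ^ r := by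
        gcongr
        exact integral_add_rpow_mul_add_rpow_le hA hB hp hν' hqν hpν hside
    _ = _ := by
        rw [mul_pow, mul_pow, ← rpow_mul_natCast hB, ← rpow_mul_natCast hA.le,
          show (α₂ / r - ν) * r = m₂ * s₂ by rw [hν_def]; field_simp; ring,
          show (α₁ / r + ν + 1) * r = m₁ * s₁ by rw [hν_def]; field_simp; linarith]
        ring

lemma exists_abs_contract_append_le_of_ne_zero (hr : r ≠ 0) (hm₁ : m₁ ≠ 0)
    (hc₁ : 0 ≤ c₁) (hc₂ : 0 ≤ c₂)
    (hb1 : ∀ z ∈ posOrthant (r + m₁), |g1 z| ≤ c₁ * (∑ i, z i) ^ α₁)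
    (hb2 : ∀ z ∈ posOrthant (r + m₂), |g2 z| ≤ c₂ * (∑ i, z i) ^ α₂)
    (hα₁ : α₁ < -(r + m₁ : ℝ) / 2)
    (hα₂ : -((r + m₂ : ℝ) + 1) / 2 < α₂) (hα₂' : α₂ < -(r + m₂ : ℝ) / 2)
    (hsum : -((r + m₁ : ℝ) + (r + m₂) + 1) / 2 < α₁ + α₂) :
    ∃ C s₁ s₂, s₁ ∈ Ioo (-1 : ℝ) (-1 / 2) ∧ s₂ ∈ Ioo (-1 : ℝ) (-1 / 2) ∧
      ∀ u ∈ posOrthant m₁, ∀ v ∈ posOrthant m₂, |contract r m₁ m₂ g1 g2 (Fin.append u v)|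
        ≤ C * ((∑ j, u j) ^ (m₁ * s₁) * (∑ j, v j) ^ (m₂ * s₂)) := by
  obtain ⟨s₁, s₂, hs₁, hs₂, hs, hν⟩ := exists_block_exponents hr hm₁ hα₁ hα₂ hα₂' hsum
  obtain ⟨C, hC⟩ := abs_contract_append_le_of_exponents hr hm₁ hc₁ hc₂ hb1 hb2
    (hs₁.2.trans (by norm_num)) (hs₂.2.le.trans (by norm_num)) hs hν
  exact ⟨C, s₁, s₂, hs₁, hs₂, hC⟩

lemma exists_abs_contract_append_le (hc₁ : 0 ≤ c₁) (hc₂ : 0 ≤ c₂)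
    (hb1 : ∀ z ∈ posOrthant (r + m₁), |g1 z| ≤ c₁ * (∑ i, z i) ^ α₁)
    (hb2 : ∀ z ∈ posOrthant (r + m₂), |g2 z| ≤ c₂ * (∑ i, z i) ^ α₂)
    (hα₁ : -((r + m₁ : ℝ) + 1) / 2 < α₁) (hα₁' : α₁ < -(r + m₁ : ℝ) / 2)
    (hα₂ : -((r + m₂ : ℝ) + 1) / 2 < α₂) (hα₂' : α₂ < -(r + m₂ : ℝ) / 2)
    (hsum : -((r + m₁ : ℝ) + (r + m₂) + 1) / 2 < α₁ + α₂) (hm : m₁ ≠ 0 ∨ m₂ ≠ 0) :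
    ∃ C s₁ s₂, s₁ ∈ Ioo (-1 : ℝ) (-1 / 2) ∧ s₂ ∈ Ioo (-1 : ℝ) (-1 / 2) ∧
      ∀ u ∈ posOrthant m₁, ∀ v ∈ posOrthant m₂, |contract r m₁ m₂ g1 g2 (Fin.append u v)|
        ≤ C * ((∑ j, u j) ^ (m₁ * s₁) * (∑ j, v j) ^ (m₂ * s₂)) := by
  rcases eq_or_ne r 0 with rfl | hr
  · simp only [CharP.cast_eq_zero, zero_add] at hα₁ hα₁' hα₂ hα₂'
    obtain ⟨s₁, hs₁, h₁⟩ := exists_rpow_sum_le_rpow_sum hα₁ hα₁'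
    obtain ⟨s₂, hs₂, h₂⟩ := exists_rpow_sum_le_rpow_sum hα₂ hα₂'
    refine ⟨c₁ * c₂, s₁, s₂, hs₁, hs₂, fun u hu v hv => ?_⟩
    have hy : (Fin.elim0 : Fin 0 → ℝ) ∈ posOrthant 0 := fun i => i.elim0
    have h := abs_mul_append_le hb1 hb2 hy hu hv
    simp only [Finset.univ_eq_empty, Finset.sum_empty, zero_add] at h
    rw [contract_zero_append]
    refine h.trans (mul_le_mul_of_nonneg_left (mul_le_mul (h₁ u hu) (h₂ v hv) (by
      have := sum_nonneg_of_mem_posOrthant hv; positivity) (by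
      have := sum_nonneg_of_mem_posOrthant hu; positivity)) (mul_nonneg hc₁ hc₂))
  rcases eq_or_ne m₁ 0 with rfl | hm₁
  · obtain ⟨C, s₂, s₁, hs₂, hs₁, hC⟩ := exists_abs_contract_append_le_of_ne_zero hr
      (hm.resolve_left (not_not.2 rfl)) hc₂ hc₁ hb2 hb1 hα₂' hα₁ hα₁' (by linarith)
    refine ⟨C, s₁, s₂, hs₁, hs₂, fun u hu v hv => ?_⟩
    rw [contract_append_comm, mul_comm ((∑ j, u j) ^ _)]
    exact hC v hv u hu
  · exact exists_abs_contract_append_le_of_ne_zero hr hm₁ hc₁ hc₂ hb1 hb2 hα₁' hα₂ hα₂' hsum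

end Contraction

theorem stmt_4_general (r m₁ m₂ : ℕ) (α₁ α₂ : ℝ)
    (g1 : (Fin (r + m₁) → ℝ) → ℝ) (g2 : (Fin (r + m₂) → ℝ) → ℝ)
    (hg1 : IsGHKB (r + m₁) α₁ g1) (hg2 : IsGHKB (r + m₂) α₂ g2)
    (hr : m₁ = m₂ → 1 ≤ m₁)
    (hsum : -((((r + m₁ : ℕ) : ℝ)) + (((r + m₂ : ℕ) : ℝ)) + 1)/2 < α₁ + α₂) :
    (∀ x ∈ posOrthant (m₁ + m₂),
      IntegrableOn (fun y : Fin r → ℝ =>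
        g1 (Fin.append y fun j : Fin m₁ => x (Fin.castAdd m₂ j)) *
          g2 (Fin.append y fun j : Fin m₂ => x (Fin.natAdd m₁ j))) (posOrthant r)) ∧
    (¬ (∀ᵐ x ∂(volume.restrict (posOrthant (m₁ + m₂))), contract r m₁ m₂ g1 g2 x = 0) →
      IsGHK (m₁ + m₂) (α₁ + α₂ + r) (contract r m₁ m₂ g1 g2)) := by
  obtain ⟨⟨hmeas1, ⟨hα₁, hα₁'⟩, hhom1, -⟩, -, c₁, hc₁, hb1⟩ := hg1
  obtain ⟨⟨hmeas2, ⟨hα₂, hα₂'⟩, hhom2, -⟩, -, c₂, hc₂, hb2⟩ := hg2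
  push_cast at hα₁ hα₁' hα₂ hα₂' hsum
  have hm : m₁ ≠ 0 ∨ m₂ ≠ 0 := by
    by_contra! h
    exact absurd (hr (h.1.trans h.2.symm)) (by omega)
  refine ⟨fun x hx => integrableOn_contract_integrand hc₁.le hc₂.le hmeas1 hmeas2 hb1 hb2
    hα₁ hα₁' hα₂ hα₂' hm (fun j => hx _) (fun j => hx _), fun _ => ?_⟩
  obtain ⟨C, s₁, s₂, hs₁, hs₂, hC⟩ :=
    exists_abs_contract_append_le hc₁.le hc₂.le hb1 hb2 hα₁ hα₁' hα₂ hα₂' hsum hm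
  refine ⟨measurable_contract hmeas1 hmeas2, ⟨by push_cast; linarith, by push_cast; linarith⟩,
    fun lam hlam x hx => contract_smul hhom1 hhom2 hlam hx, ?_⟩
  exact integrableOn_mul_comp_one_add_of_abs_le (measurable_contract hmeas1 hmeas2) hs₁ hs₂ hC

/-- Let `g1, g2` be symmetric GHK(B)'s on `(0,∞)^{k₁}` and `(0,∞)^{k₂}` with exponents
`α₁, α₂`, where `k₁ = r + m₁`, `k₂ = r + m₂` (so `0 ≤ r ≤ min(k₁,k₂)`, and `r ≤ k₁ - 1`
when `k₁ = k₂`, i.e. `m₁ ≥ 1` when `m₁ = m₂`). Assume `k₁ ≥ 2` or `k₂ ≥ 2` and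
`α₁ + α₂ > -(k₁+k₂+1)/2`. Then for every `x` in the positive orthant of dimension
`K = m₁ + m₂ = k₁ + k₂ - 2r` the contraction integral converges absolutely, and if
`g1 ⊗_r g2` is not a.e. zero on the orthant, it is a GHK on `(0,∞)^K` with homogeneity
exponent `α₁ + α₂ + r ∈ (-(K+1)/2, -K/2)`. -/
theorem stmt_4 (r m₁ m₂ : ℕ) (α₁ α₂ : ℝ)
    (g1 : (Fin (r + m₁) → ℝ) → ℝ) (g2 : (Fin (r + m₂) → ℝ) → ℝ)
    (hg1 : IsGHKB (r + m₁) α₁ g1) (hg2 : IsGHKB (r + m₂) α₂ g2)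
    (hs1 : IsSymmFun (r + m₁) g1) (hs2 : IsSymmFun (r + m₂) g2)
    (hk : 2 ≤ r + m₁ ∨ 2 ≤ r + m₂)
    (hr : m₁ = m₂ → 1 ≤ m₁)
    (hsum : -((((r + m₁ : ℕ) : ℝ)) + (((r + m₂ : ℕ) : ℝ)) + 1)/2 < α₁ + α₂) :
    (∀ x ∈ posOrthant (m₁ + m₂),
      IntegrableOn (fun y : Fin r → ℝ =>
        g1 (Fin.append y fun j : Fin m₁ => x (Fin.castAdd m₂ j)) *
          g2 (Fin.append y fun j : Fin m₂ => x (Fin.natAdd m₁ j))) (posOrthant r)) ∧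
    (¬ (∀ᵐ x ∂(volume.restrict (posOrthant (m₁ + m₂))), contract r m₁ m₂ g1 g2 x = 0) →
      IsGHK (m₁ + m₂) (α₁ + α₂ + r) (contract r m₁ m₂ g1 g2)) :=
  stmt_4_general r m₁ m₂ α₁ α₂ g1 g2 hg1 hg2 hr hsum
end

section
/- Let k ≥ 1 be an integer, let γ₁,…,γ_k < -1/2 be real numbers, set α = γ₁+…+γ_k and H* = α + k/2 + 1, and suppose H* > 1/2. Let c₀ > 0 and let a: (ℤ₊)^k → ℝ satisfy |a(i₁,…,i_k)| ≤ c₀·i₁^{γ₁}…i_k^{γ_k} for all positive integers i₁,…,i_k, and let Σ: {1,…,k}×{1,…,k} → ℝ satisfy |Σ(p,q)| ≤ 1 for all p, q. For each integer n ≥ 1 define γ(n) = ∑_{σ ∈ S_k} ∑'_{(i₁,…,i_k) ∈ (ℤ₊)^k} a(i₁,…,i_k)·a(i_{σ(1)}+n,…,i_{σ(k)}+n)·∏_{p=1}^k Σ(p, σ(p)), where S_k is the set of all permutations of {1,…,k} and ∑' denotes summation restricted to tuples with pairwise distinct coordinates (i_p ≠ i_q for p ≠ q). Then all these series converge absolutely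 and there is a constant c₂ > 0 (depending only on c₀, k, γ₁,…,γ_k) such that |γ(n)| ≤ c₂·n^{2H*-2} for all n ≥ 1. -/
/-!
Each term of the series is dominated, via the bounds on `a` and `Σ`, by
`c₀² ∏ₘ iₘ^{γₘ} (iₘ + n)^{γ_{σ⁻¹ m}}`, so the series over injective tuples is bounded by
`c₀²` times a product of one-dimensional series `∑ⱼ j^p (j + n)^q` with `p = γₘ`,
`q = γ_{σ⁻¹ m}`. Since `H* > 1/2` forces every `γₘ > -1`, we have `-1 < p < 0` and
`p + q < -1`; splitting at `j = n`, the terms with `j ≤ n` contribute `O(n^{p+1} n^q)` and those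
with `j > n` contribute `O(n^{p+q+1})`. The exponents add up to `2 ∑ γₘ + k = 2H* - 2`.
-/

open Finset

lemma sum_range_add_one_rpow_le {p : ℝ} (hp : -1 < p) (hp0 : p ≤ 0) (N : ℕ) :
    ∑ i ∈ range N, ((i : ℝ) + 1) ^ p ≤ (N : ℝ) ^ (p + 1) / (p + 1) := by
  have hp1 : 0 < p + 1 := by linarith
  rcases N with _ | m
  · simp [Real.zero_rpow hp1.ne']
  have hanti : AntitoneOn (fun x : ℝ => x ^ p) (Set.Icc 1 (1 + m)) := fun x hx y _ hxy =>
    Real.rpow_le_rpow_of_nonpos (zero_lt_one.trans_le hx.1) hxy hp0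
  have hint := hanti.sum_le_integral
  rw [integral_rpow (Or.inl hp), Real.one_rpow] at hint
  have hinv : 1 ≤ 1 / (p + 1) := by rw [le_div_iff₀ hp1]; linarith
  rw [sum_range_succ']
  push_cast at hint ⊢
  simp only [add_comm (1 : ℝ), sub_div, zero_add, Real.one_rpow] at hint ⊢
  linarith

lemma tsum_rpow_nat_add_le {s : ℝ} (hs : s < -1) {N : ℕ} (hN : 0 < N) :
    ∑' i : ℕ, ((i + N + 1 : ℕ) : ℝ) ^ s ≤ (N : ℝ) ^ (s + 1) / (-(s + 1)) := by
  have hN' : (0 : ℝ) < N := by exact_mod_cast hN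
  have hanti : AntitoneOn (fun x : ℝ => x ^ s) (Set.Ici N) := fun x hx y _ hxy =>
    Real.rpow_le_rpow_of_nonpos (hN'.trans_le hx) hxy (by linarith)
  refine (hanti.tsum_comp_add_le_integral N (integrableOn_Ioi_rpow_of_lt hs hN')
    fun t ht => Real.rpow_nonneg (hN'.trans ht).le s).trans_eq ?_
  rw [integral_Ioi_rpow_of_lt hs hN', neg_div, div_neg]

lemma rpow_mul_add_rpow_le {p q x y : ℝ} (hx : 0 < x) (hy : 0 ≤ y) (hq : q ≤ 0) :
    x ^ p * (x + y) ^ q ≤ x ^ (p + q) := by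
  rw [Real.rpow_add hx]
  exact mul_le_mul_of_nonneg_left
    (Real.rpow_le_rpow_of_nonpos hx (le_add_of_nonneg_right hy) hq) (by positivity)

lemma summable_rpow_mul_add_rpow {p q y : ℝ} (hq : q ≤ 0) (hpq : p + q < -1) (hy : 0 ≤ y) :
    Summable fun j : ℕ+ => ((j : ℕ) : ℝ) ^ p * ((j : ℕ) + y) ^ q := by
  refine Summable.of_nonneg_of_le (fun j => by positivity)
    (fun j => rpow_mul_add_rpow_le (by positivity) hy hq) ?_
  exact summable_pnat_iff_summable_nat.mpr (Real.summable_nat_rpow.mpr hpq)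

lemma tsum_rpow_mul_add_rpow_le {p q : ℝ} (hp : -1 < p) (hp0 : p ≤ 0) (hpq : p + q < -1)
    {n : ℕ} (hn : 0 < n) :
    ∑' j : ℕ+, ((j : ℕ) : ℝ) ^ p * ((j : ℕ) + (n : ℝ)) ^ q
      ≤ (1 / (p + 1) + 1 / (-(p + q + 1))) * (n : ℝ) ^ (p + q + 1) := by
  have hq : q ≤ 0 := by linarith
  have hn' : (0 : ℝ) < n := by exact_mod_cast hn
  set F : ℕ → ℝ := fun i => ((i + 1 : ℕ) : ℝ) ^ p * ((i + 1 : ℕ) + (n : ℝ)) ^ q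
  have hF : Summable F := (summable_pnat_iff_summable_succ (f := fun j : ℕ =>
    (j : ℝ) ^ p * (j + (n : ℝ)) ^ q)).mp (summable_rpow_mul_add_rpow hq hpq hn'.le)
  rw [tsum_pnat_eq_tsum_succ (f := fun j : ℕ => (j : ℝ) ^ p * (j + (n : ℝ)) ^ q),
    ← hF.sum_add_tsum_nat_add n]
  have hhead : ∑ i ∈ range n, F i ≤ (n : ℝ) ^ (p + 1) / (p + 1) * (n : ℝ) ^ q := by
    refine (sum_le_sum fun i _ => ?_).trans_eq (sum_mul ..).symm |>.trans
      (mul_le_mul_of_nonneg_right (sum_range_add_one_rpow_le hp hp0 n) (by positivity))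
    simp only [F]
    push_cast
    exact mul_le_mul_of_nonneg_left
      (Real.rpow_le_rpow_of_nonpos hn' (le_add_of_nonneg_left (by positivity)) hq) (by positivity)
  have htail : ∑' i, F (i + n) ≤ (n : ℝ) ^ (p + q + 1) / (-(p + q + 1)) := by
    refine (Summable.tsum_le_tsum (fun i => ?_) ((summable_nat_add_iff n).mpr hF) ?_).trans
      (tsum_rpow_nat_add_le hpq hn)
    · exact rpow_mul_add_rpow_le (by positivity) n.cast_nonneg hq
    · exact (summable_nat_add_iff (n + 1)).mpr (Real.summable_nat_rpow.mpr hpq)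
  calc ∑ i ∈ range n, F i + ∑' i, F (i + n)
      ≤ (n : ℝ) ^ (p + 1) / (p + 1) * (n : ℝ) ^ q
        + (n : ℝ) ^ (p + q + 1) / (-(p + q + 1)) := add_le_add hhead htail
    _ = _ := by
      rw [div_mul_eq_mul_div, ← Real.rpow_add hn', add_right_comm]
      ring

section PiProd

variable {ι β : Type*} [Fintype ι] {f : ι → β → ℝ}

lemma sum_pi_prod_le_prod_tsum (hf0 : ∀ m j, 0 ≤ f m j) (hf : ∀ m, Summable (f m))
    (u : Finset (ι → β)) : ∑ i ∈ u, ∏ m, f m (i m) ≤ ∏ m, ∑' j, f m j := by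
  classical
  calc ∑ i ∈ u, ∏ m, f m (i m)
      ≤ ∑ i ∈ Fintype.piFinset fun m => u.image (· m), ∏ m, f m (i m) :=
        sum_le_sum_of_subset_of_nonneg
          (fun i hi => Fintype.mem_piFinset.mpr fun m => mem_image_of_mem _ hi)
          fun i _ _ => prod_nonneg fun m _ => hf0 m (i m)
    _ = ∏ m, ∑ j ∈ u.image (· m), f m j := (prod_univ_sum _ _).symm
    _ ≤ ∏ m, ∑' j, f m j := prod_le_prod (fun m _ => sum_nonneg fun j _ => hf0 m j)
        fun m _ => (hf m).sum_le_tsum _ fun j _ => hf0 m j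

lemma summable_pi_prod_of_nonneg (hf0 : ∀ m j, 0 ≤ f m j) (hf : ∀ m, Summable (f m)) :
    Summable fun i : ι → β => ∏ m, f m (i m) :=
  summable_of_sum_le (fun i => prod_nonneg fun m _ => hf0 m (i m))
    (sum_pi_prod_le_prod_tsum hf0 hf)

lemma tsum_pi_prod_le_prod_tsum (hf0 : ∀ m j, 0 ≤ f m j) (hf : ∀ m, Summable (f m)) :
    ∑' i : ι → β, ∏ m, f m (i m) ≤ ∏ m, ∑' j, f m j :=
  Real.tsum_le_of_sum_le (fun i => prod_nonneg fun m _ => hf0 m (i m))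
    (sum_pi_prod_le_prod_tsum hf0 hf)

end PiProd

lemma abs_tsum_subtype_le {α : Type*} {T g : α → ℝ} (hg : Summable g) (hT : ∀ x, |T x| ≤ g x)
    (P : α → Prop) : |∑' x : {x // P x}, T x| ≤ ∑' x, g x :=
  calc |∑' x : {x // P x}, T x| ≤ ∑' x : {x // P x}, g x :=
        (Real.norm_eq_abs _).symm.trans_le <|
          tsum_of_norm_bounded (hg.comp_injective Subtype.val_injective).hasSum fun x => hT x
    _ ≤ ∑' x, g x := hg.tsum_subtype_le g {x | P x} fun x => (abs_nonneg _).trans (hT x)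

lemma sum_le_add_card_sub_one_mul {ι : Type*} [Fintype ι] {γ : ι → ℝ} {b : ℝ}
    (h : ∀ m, γ m ≤ b) (j : ι) : ∑ m, γ m ≤ γ j + (Fintype.card ι - 1) * b := by
  classical
  have hcard : ((univ.erase j).card : ℝ) = Fintype.card ι - 1 := by
    rw [eq_sub_iff_add_eq]; exact_mod_cast card_erase_add_one (mem_univ j)
  rw [← add_sum_erase _ _ (mem_univ j), ← hcard, ← nsmul_eq_mul]
  gcongr
  exact sum_le_card_nsmul _ _ _ fun m _ => h m

section Autocovariance

variable {ι : Type*} [Fintype ι] {c₀ : ℝ} {γ : ι → ℝ} {a : (ι → ℕ+) → ℝ} {S : ι → ι → ℝ}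

lemma abs_autocov_term_le (hc₀ : 0 ≤ c₀)
    (ha : ∀ i : ι → ℕ+, |a i| ≤ c₀ * ∏ j, ((i j : ℕ) : ℝ) ^ (γ j))
    (hS : ∀ p q, |S p q| ≤ 1) (σ : Equiv.Perm ι) (n : ℕ+) (i : ι → ℕ+) :
    |a i * a (fun p => i (σ p) + n) * ∏ p, S p (σ p)|
      ≤ c₀ ^ 2 * ∏ m, ((i m : ℕ) : ℝ) ^ γ m * (((i m : ℕ) : ℝ) + (n : ℕ)) ^ γ (σ⁻¹ m) := by
  have hshift : |a (fun p => i (σ p) + n)|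
      ≤ c₀ * ∏ m, (((i m : ℕ) : ℝ) + (n : ℕ)) ^ γ (σ⁻¹ m) := by
    refine (ha _).trans_eq ?_
    rw [← Equiv.prod_comp σ fun m => (((i m : ℕ) : ℝ) + (n : ℕ)) ^ γ (σ⁻¹ m)]
    simp
  have hSσ : |∏ p, S p (σ p)| ≤ 1 := by
    rw [abs_prod]; exact prod_le_one (fun p _ => abs_nonneg _) fun p _ => hS p (σ p)
  rw [abs_mul, abs_mul, prod_mul_distrib]
  calc |a i| * |a (fun p => i (σ p) + n)| * |∏ p, S p (σ p)|
      ≤ (c₀ * ∏ j, ((i j : ℕ) : ℝ) ^ (γ j))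
          * (c₀ * ∏ m, (((i m : ℕ) : ℝ) + (n : ℕ)) ^ γ (σ⁻¹ m)) * 1 :=
        mul_le_mul (mul_le_mul (ha i) hshift (abs_nonneg _) (by positivity)) hSσ (abs_nonneg _)
          (by positivity)
    _ = _ := by ring

lemma exists_autocov_perm_bound (hγ1 : ∀ j, -1 < γ j) (hγ : ∀ j, γ j < -1/2) (hc₀ : 0 < c₀)
    (ha : ∀ i : ι → ℕ+, |a i| ≤ c₀ * ∏ j, ((i j : ℕ) : ℝ) ^ (γ j))
    (hS : ∀ p q, |S p q| ≤ 1) (σ : Equiv.Perm ι) (P : (ι → ℕ+) → Prop) :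
    ∃ C : ℝ, 0 < C ∧ ∀ n : ℕ+,
      Summable (fun i : {i // P i} => a i.1 * a (fun p => i.1 (σ p) + n) * ∏ p, S p (σ p)) ∧
      |∑' i : {i // P i}, a i.1 * a (fun p => i.1 (σ p) + n) * ∏ p, S p (σ p)|
        ≤ C * ((n : ℕ) : ℝ) ^ (2 * ∑ j, γ j + Fintype.card ι) := by
  have hγ0 : ∀ j, γ j ≤ 0 := fun j => by linarith [hγ j]
  have hpair : ∀ m, γ m + γ (σ⁻¹ m) < -1 := fun m => by linarith [hγ m, hγ (σ⁻¹ m)]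
  set K : ι → ℝ := fun m => 1 / (γ m + 1) + 1 / (-(γ m + γ (σ⁻¹ m) + 1))
  have hK : ∀ m, 0 < K m := fun m => by
    have := hγ1 m; have := hpair m
    exact add_pos (one_div_pos.mpr (by linarith)) (one_div_pos.mpr (by linarith))
  refine ⟨c₀ ^ 2 * ∏ m, K m, mul_pos (pow_pos hc₀ 2) (prod_pos fun m _ => hK m), fun n => ?_⟩
  have hn : (0 : ℝ) < (n : ℕ) := by exact_mod_cast n.pos
  set f : ι → ℕ+ → ℝ := fun m j => ((j : ℕ) : ℝ) ^ γ m * ((j : ℕ) + ((n : ℕ) : ℝ)) ^ γ (σ⁻¹ m)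
  have hf0 : ∀ m j, 0 ≤ f m j := fun m j => by positivity
  have hf : ∀ m, Summable (f m) := fun m =>
    summable_rpow_mul_add_rpow (hγ0 _) (hpair m) n.val.cast_nonneg
  have hdom : ∀ i : ι → ℕ+, |a i * a (fun p => i (σ p) + n) * ∏ p, S p (σ p)|
      ≤ c₀ ^ 2 * ∏ m, f m (i m) := abs_autocov_term_le hc₀.le ha hS σ n
  have hmaj : Summable fun i : ι → ℕ+ => c₀ ^ 2 * ∏ m, f m (i m) :=
    (summable_pi_prod_of_nonneg hf0 hf).mul_left _
  have hT : Summable fun i : ι → ℕ+ => a i * a (fun p => i (σ p) + n) * ∏ p, S p (σ p) :=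
    hmaj.of_norm_bounded hdom
  refine ⟨hT.comp_injective Subtype.val_injective, ?_⟩
  have hexp : ∑ m, (γ m + γ (σ⁻¹ m) + 1) = 2 * ∑ j, γ j + Fintype.card ι := by
    rw [sum_add_distrib, sum_add_distrib, Equiv.sum_comp σ⁻¹ γ]
    simp only [sum_const, card_univ, nsmul_eq_mul, mul_one]
    ring
  calc |∑' i : {i // P i}, a i.1 * a (fun p => i.1 (σ p) + n) * ∏ p, S p (σ p)|
      ≤ ∑' i : ι → ℕ+, c₀ ^ 2 * ∏ m, f m (i m) := abs_tsum_subtype_le hmaj hdom P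
    _ ≤ c₀ ^ 2 * ∏ m, ∑' j, f m j := by
        rw [tsum_mul_left]; gcongr; exact tsum_pi_prod_le_prod_tsum hf0 hf
    _ ≤ c₀ ^ 2 * ∏ m, (K m * ((n : ℕ) : ℝ) ^ (γ m + γ (σ⁻¹ m) + 1)) := by
        gcongr with m
        exact tsum_rpow_mul_add_rpow_le (hγ1 m) (hγ0 m) (hpair m) n.pos
    _ = _ := by rw [prod_mul_distrib, ← Real.rpow_sum_of_pos hn, hexp, mul_assoc]

end Autocovariance

theorem stmt_10_general (k : ℕ) (γ : Fin k → ℝ) (hγ : ∀ j, γ j < -1/2)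
    (c₀ : ℝ) (hc₀ : 0 < c₀) (H : ℝ) (hH : H = (∑ j, γ j) + (k : ℝ)/2 + 1)
    (hH' : 1/2 < H)
    (a : (Fin k → ℕ+) → ℝ)
    (ha : ∀ i : Fin k → ℕ+, |a i| ≤ c₀ * ∏ j, ((i j : ℕ) : ℝ) ^ (γ j))
    (S : Fin k → Fin k → ℝ) (hS : ∀ p q, |S p q| ≤ 1) :
    (∀ n : ℕ+, ∀ σ : Equiv.Perm (Fin k),
      Summable (fun i : {i : Fin k → ℕ+ // Function.Injective i} =>
        a i.1 * a (fun p => i.1 (σ p) + n) * ∏ p, S p (σ p))) ∧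
    ∃ c₂ : ℝ, 0 < c₂ ∧ ∀ n : ℕ+,
      |∑ σ : Equiv.Perm (Fin k),
          ∑' i : {i : Fin k → ℕ+ // Function.Injective i},
            a i.1 * a (fun p => i.1 (σ p) + n) * ∏ p, S p (σ p)|
        ≤ c₂ * ((n : ℕ) : ℝ) ^ (2*H - 2) := by
  have hγ1 : ∀ j, -1 < γ j := fun j => by
    have := sum_le_add_card_sub_one_mul (fun m => (hγ m).le) j
    rw [Fintype.card_fin] at this
    linarith
  have hexp : 2 * ∑ j, γ j + Fintype.card (Fin k) = 2 * H - 2 := by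
    rw [Fintype.card_fin, hH]; ring
  choose C hC hbound using fun σ : Equiv.Perm (Fin k) =>
    exists_autocov_perm_bound hγ1 hγ hc₀ ha hS σ Function.Injective
  refine ⟨fun n σ => (hbound σ n).1, ∑ σ, C σ, sum_pos (fun σ _ => hC σ) univ_nonempty,
    fun n => ?_⟩
  rw [← hexp, sum_mul]
  exact (abs_sum_le_sum_abs _ _).trans (sum_le_sum fun σ _ => (hbound σ n).2)

/-- Off-diagonal autocovariance bound, long-memory case (`H* > 1/2`). For coefficients
`a` on `(ℤ₊)^k` bounded by `c₀ i₁^{γ₁}⋯i_k^{γ_k}` with all `γ_j < -1/2`, and correlations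
`Σ` bounded by `1`, the autocovariance
`γ(n) = ∑_{σ ∈ S_k} ∑'_{i injective} a(i) a(i∘σ + n) ∏_p Σ(p,σ(p))`
is absolutely convergent and satisfies `|γ(n)| ≤ c₂ n^{2H*-2}` with
`H* = ∑γ_j + k/2 + 1`. -/
theorem stmt_10 (k : ℕ) (hk : 1 ≤ k) (γ : Fin k → ℝ) (hγ : ∀ j, γ j < -1/2)
    (c₀ : ℝ) (hc₀ : 0 < c₀) (H : ℝ) (hH : H = (∑ j, γ j) + (k : ℝ)/2 + 1)
    (hH' : 1/2 < H)
    (a : (Fin k → ℕ+) → ℝ)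
    (ha : ∀ i : Fin k → ℕ+, |a i| ≤ c₀ * ∏ j, ((i j : ℕ) : ℝ) ^ (γ j))
    (S : Fin k → Fin k → ℝ) (hS : ∀ p q, |S p q| ≤ 1) :
    (∀ n : ℕ+, ∀ σ : Equiv.Perm (Fin k),
      Summable (fun i : {i : Fin k → ℕ+ // Function.Injective i} =>
        a i.1 * a (fun p => i.1 (σ p) + n) * ∏ p, S p (σ p))) ∧
    ∃ c₂ : ℝ, 0 < c₂ ∧ ∀ n : ℕ+,
      |∑ σ : Equiv.Perm (Fin k),
          ∑' i : {i : Fin k → ℕ+ // Function.Injective i},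
            a i.1 * a (fun p => i.1 (σ p) + n) * ∏ p, S p (σ p)|
        ≤ c₂ * ((n : ℕ) : ℝ) ^ (2*H - 2) :=
  stmt_10_general k γ hγ c₀ hc₀ H hH hH' a ha S hS
end

section
/- Let s ≥ 1 be an integer and let α₁ < -s/2 and α₂ < -s/2 be real numbers. Then there exists a constant C > 0 (depending only on s, α₁, α₂) such that for all reals A > 0 and B > 0, the series ∑_{u ∈ (ℤ₊)^s} (u₁+…+u_s+A)^{α₁} (u₁+…+u_s+B)^{α₂} converges and is bounded by C·A^{α₁+s/2}·B^{α₂+s/2}. -/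
/-!
Sum out one coordinate at a time. If `t ≥ 0` is the sum of the remaining coordinates, Cauchy–Schwarz
and the integral comparison `∑_{i ≥ 1} (i + A)^δ ≤ A^(δ+1) / (-(δ+1))` give
`∑_{i ≥ 1} (i + t + A)^α₁ (i + t + B)^α₂ ≤ K (t + A)^(α₁+1/2) (t + B)^(α₂+1/2)`,
so each summation raises both exponents by `1/2`; after `s` steps they are `α₁ + s/2` and `α₂ + s/2`.
-/

open Finset Real

theorem sum_range_nat_succ_add_rpow_le {δ A : ℝ} (hδ : δ < -1) (hA : 0 < A) (n : ℕ) :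
    ∑ i ∈ range n, (((i + 1 : ℕ) : ℝ) + A) ^ δ ≤ (-(δ + 1))⁻¹ * A ^ (δ + 1) := by
  have hanti : AntitoneOn (fun x : ℝ => (x + A) ^ δ) (Set.Icc 0 (0 + n)) :=
    fun x hx y _ hxy => rpow_le_rpow_of_nonpos (by linarith [hx.1]) (by linarith) (by linarith)
  have hint : ∫ x in (0 : ℝ)..0 + n, (x + A) ^ δ
      = (-(δ + 1))⁻¹ * (A ^ (δ + 1) - (n + A) ^ (δ + 1)) := by
    rw [intervalIntegral.integral_comp_add_right (· ^ δ), integral_rpow]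
    · field_simp
      ring_nf
    · exact Or.inr ⟨by linarith, fun h => by
        rcases Set.mem_uIcc.1 h with h | h <;> linarith [(n.cast_nonneg : (0 : ℝ) ≤ n)]⟩
  calc ∑ i ∈ range n, (((i + 1 : ℕ) : ℝ) + A) ^ δ
      ≤ ∫ x in (0 : ℝ)..0 + n, (x + A) ^ δ := by simpa using hanti.sum_le_integral
    _ ≤ (-(δ + 1))⁻¹ * A ^ (δ + 1) := by
      rw [hint]
      gcongr
      · exact inv_nonneg.2 (by linarith)
      · exact sub_le_self _ (by positivity)

theorem summable_and_tsum_pnat_add_rpow_le {δ A : ℝ} (hδ : δ < -1) (hA : 0 < A) :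
    Summable (fun i : ℕ+ => ((i : ℝ) + A) ^ δ) ∧
      ∑' i : ℕ+, ((i : ℝ) + A) ^ δ ≤ (-(δ + 1))⁻¹ * A ^ (δ + 1) := by
  have hnonneg (n : ℕ) : 0 ≤ (((n + 1 : ℕ) : ℝ) + A) ^ δ := by positivity
  have hsum : Summable fun n : ℕ => (((n + 1 : ℕ) : ℝ) + A) ^ δ :=
    summable_of_sum_range_le hnonneg (sum_range_nat_succ_add_rpow_le hδ hA)
  refine ⟨summable_pnat_iff_summable_succ (f := fun n : ℕ => ((n : ℝ) + A) ^ δ) |>.2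
    (by simpa using hsum), ?_⟩
  rw [tsum_pnat_eq_tsum_succ (f := fun n : ℕ => ((n : ℝ) + A) ^ δ)]
  simpa using hsum.tsum_le_of_sum_range_le (sum_range_nat_succ_add_rpow_le hδ hA)

theorem summable_and_tsum_pnat_add_rpow_mul_add_rpow_le {γ β A B : ℝ} (hγ : γ < -1 / 2)
    (hβ : β < -1 / 2) (hA : 0 < A) (hB : 0 < B) :
    Summable (fun i : ℕ+ => ((i : ℝ) + A) ^ γ * ((i : ℝ) + B) ^ β) ∧
      ∑' i : ℕ+, ((i : ℝ) + A) ^ γ * ((i : ℝ) + B) ^ β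
        ≤ √((-(2 * γ + 1))⁻¹ * (-(2 * β + 1))⁻¹) * A ^ (γ + 1 / 2) * B ^ (β + 1 / 2) := by
  have hsq {C δ : ℝ} (hC : 0 < C) :
      (fun i : ℕ+ => (((i : ℝ) + C) ^ δ) ^ (2 : ℝ)) = fun i : ℕ+ => ((i : ℝ) + C) ^ (2 * δ) := by
    ext i
    rw [← rpow_mul (by positivity), mul_comm]
  obtain ⟨hAsum, hAle⟩ := summable_and_tsum_pnat_add_rpow_le (by linarith : 2 * γ < -1) hA
  obtain ⟨hBsum, hBle⟩ := summable_and_tsum_pnat_add_rpow_le (by linarith : 2 * β < -1) hB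
  obtain ⟨hsum, hle⟩ := summable_and_inner_le_Lp_mul_Lq_tsum_of_nonneg HolderConjugate.two_two
    (fun i => by positivity) (fun i => by positivity) (hsq hA ▸ hAsum) (hsq hB ▸ hBsum)
  have hγ' : 0 ≤ (-(2 * γ + 1))⁻¹ := inv_nonneg.2 (by linarith)
  have hβ' : 0 ≤ (-(2 * β + 1))⁻¹ := inv_nonneg.2 (by linarith)
  refine ⟨hsum, hle.trans ?_⟩
  rw [hsq hA, hsq hB]
  calc _ ≤ ((-(2 * γ + 1))⁻¹ * A ^ (2 * γ + 1)) ^ (1 / 2 : ℝ) *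
        ((-(2 * β + 1))⁻¹ * B ^ (2 * β + 1)) ^ (1 / 2 : ℝ) := by
        gcongr
    _ = _ := by
      rw [mul_rpow hγ' (by positivity), mul_rpow hβ' (by positivity), ← rpow_mul hA.le,
        ← rpow_mul hB.le, sqrt_eq_rpow, mul_rpow hγ' hβ']
      ring_nf

theorem summable_and_tsum_prod_le_of_fiberwise {α β : Type*} {f : α × β → ℝ} {g : α → ℝ}
    (hf : 0 ≤ f) (hfib : ∀ a, Summable fun b => f (a, b)) (hle : ∀ a, ∑' b, f (a, b) ≤ g a)
    (hg : Summable g) : Summable f ∧ ∑' p, f p ≤ ∑' a, g a := by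
  have hfib_sum : Summable fun a => ∑' b, f (a, b) :=
    hg.of_nonneg_of_le (fun a => tsum_nonneg fun b => hf (a, b)) hle
  have hsum : Summable f := (summable_prod_of_nonneg hf).2 ⟨hfib, hfib_sum⟩
  exact ⟨hsum, (hsum.tsum_prod' hfib).trans_le (hfib_sum.tsum_le_tsum hle hg)⟩

theorem summable_and_tsum_pnat_tuple_succ_le {s : ℕ} {f g : ℝ → ℝ} (hf : ∀ t, 0 < t → 0 ≤ f t)
    (hfib : ∀ t, 0 ≤ t → Summable (fun i : ℕ+ => f (i + t)) ∧ ∑' i : ℕ+, f (i + t) ≤ g t)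
    (hg : Summable fun v : Fin s → ℕ+ => g (∑ j, (v j : ℝ))) :
    Summable (fun u : Fin (s + 1) → ℕ+ => f (∑ j, (u j : ℝ))) ∧
      ∑' u : Fin (s + 1) → ℕ+, f (∑ j, (u j : ℝ)) ≤ ∑' v : Fin s → ℕ+, g (∑ j, (v j : ℝ)) := by
  let e := (Equiv.prodComm _ _).trans (Fin.consEquiv fun _ : Fin (s + 1) => ℕ+)
  have he (p : (Fin s → ℕ+) × ℕ+) : ∑ j, (e p j : ℝ) = p.2 + ∑ j, (p.1 j : ℝ) := by
    simp [e, Fin.sum_univ_succ]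
  have hT (v : Fin s → ℕ+) : 0 ≤ ∑ j, (v j : ℝ) := by positivity
  obtain ⟨hsum, hle⟩ := summable_and_tsum_prod_le_of_fiberwise
    (f := fun p => f (∑ j, (e p j : ℝ))) (fun p => hf _ (by rw [he]; positivity))
    (fun v => by simpa only [he] using (hfib _ (hT v)).1)
    (fun v => by simpa only [he] using (hfib _ (hT v)).2) hg
  exact ⟨e.summable_iff.1 hsum, e.tsum_eq (fun u => f (∑ j, (u j : ℝ))) ▸ hle⟩

theorem stmt_13_general (s : ℕ) (α₁ α₂ : ℝ)
    (h1 : α₁ < -(s : ℝ)/2) (h2 : α₂ < -(s : ℝ)/2) :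
    ∃ C : ℝ, 0 < C ∧ ∀ A B : ℝ, 0 < A → 0 < B →
      Summable (fun u : Fin s → ℕ+ =>
        ((∑ j, (u j : ℝ)) + A) ^ α₁ * ((∑ j, (u j : ℝ)) + B) ^ α₂) ∧
      ∑' u : Fin s → ℕ+, ((∑ j, (u j : ℝ)) + A) ^ α₁ * ((∑ j, (u j : ℝ)) + B) ^ α₂
        ≤ C * A ^ (α₁ + s/2) * B ^ (α₂ + s/2) := by
  induction s generalizing α₁ α₂ with
  | zero => exact ⟨1, one_pos, fun A B _ _ => ⟨.of_finite, by simp⟩⟩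
  | succ s ih =>
    push_cast at h1 h2
    have hα₁ : α₁ < -1 / 2 := by linarith [s.cast_nonneg (α := ℝ)]
    have hα₂ : α₂ < -1 / 2 := by linarith [s.cast_nonneg (α := ℝ)]
    obtain ⟨C, hC, hbound⟩ := ih (α₁ + 1 / 2) (α₂ + 1 / 2) (by linarith) (by linarith)
    set K := √((-(2 * α₁ + 1))⁻¹ * (-(2 * α₂ + 1))⁻¹)
    have hK : 0 < K := sqrt_pos.2 (mul_pos (inv_pos.2 (by linarith)) (inv_pos.2 (by linarith)))
    refine ⟨K * C, by positivity, fun A B hA hB => ?_⟩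
    obtain ⟨hsum, hle⟩ := hbound A B hA hB
    obtain ⟨hsum_succ, hle_succ⟩ := summable_and_tsum_pnat_tuple_succ_le (s := s)
      (f := fun t => (t + A) ^ α₁ * (t + B) ^ α₂)
      (g := fun t => K * ((t + A) ^ (α₁ + 1 / 2) * (t + B) ^ (α₂ + 1 / 2)))
      (fun t ht => by positivity)
      (fun t ht => by
        simpa only [add_assoc, mul_assoc] using
          summable_and_tsum_pnat_add_rpow_mul_add_rpow_le hα₁ hα₂
            (by positivity : 0 < t + A) (by positivity : 0 < t + B))
      (hsum.mul_left K)
    refine ⟨hsum_succ, hle_succ.trans ?_⟩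
    rw [tsum_mul_left]
    calc _ ≤ K * (C * A ^ (α₁ + 1 / 2 + s / 2) * B ^ (α₂ + 1 / 2 + s / 2)) := by gcongr
      _ = _ := by push_cast; ring_nf

/-- For an integer `s ≥ 1` and reals `α₁, α₂ < -s/2`, there is `C > 0` (depending only on
`s, α₁, α₂`) such that for all `A, B > 0` the series
`∑_{u ∈ (ℤ₊)^s} (u₁+…+u_s+A)^{α₁} (u₁+…+u_s+B)^{α₂}` converges and is bounded by
`C·A^{α₁+s/2}·B^{α₂+s/2}`. -/
theorem stmt_13 (s : ℕ) (hs : 1 ≤ s) (α₁ α₂ : ℝ)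
    (h1 : α₁ < -(s : ℝ)/2) (h2 : α₂ < -(s : ℝ)/2) :
    ∃ C : ℝ, 0 < C ∧ ∀ A B : ℝ, 0 < A → 0 < B →
      Summable (fun u : Fin s → ℕ+ =>
        ((∑ j, (u j : ℝ)) + A) ^ α₁ * ((∑ j, (u j : ℝ)) + B) ^ α₂) ∧
      ∑' u : Fin s → ℕ+, ((∑ j, (u j : ℝ)) + A) ^ α₁ * ((∑ j, (u j : ℝ)) + B) ^ α₂
        ≤ C * A ^ (α₁ + s/2) * B ^ (α₂ + s/2) :=
  stmt_13_general s α₁ α₂ h1 h2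
end

section
/- Let s ≥ 1 be an integer and let α₁, α₂ be real numbers with -(s+1)/2 < α₁ < -s/2 and α₂ < -s/2. Then there exists a constant C > 0 (depending only on s, α₁, α₂) such that for every real B > 0, the series ∑_{u ∈ (ℤ₊)^s} (u₁+…+u_s)^{α₁} (u₁+…+u_s+B)^{α₂} converges and is bounded by C·B^{α₁+α₂+s}. -/
/-!
At most `n ^ (s - 1)` tuples in `(ℤ₊)ˢ` have sum `n`: such a tuple is determined by its first
`s - 1` entries, each less than `n`. Grouping by the sum, the series is dominated by
`∑ₙ n ^ γ (n + B) ^ α₂` with `γ = s - 1 + α₁`, where the hypotheses give `-1 < γ` and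
`γ + α₂ < -1`. On `[n, n + 1)` each factor of this summand varies by a bounded ratio, so the sum
is at most a constant times `∫₀^∞ x ^ γ (x + B) ^ α₂ dx`, which converges at `0` and at `∞` and
equals `B ^ (γ + α₂ + 1) ∫₀^∞ t ^ γ (t + 1) ^ α₂ dt` by the substitution `x = B t`.
-/

open Finset MeasureTheory Real

theorem rpow_le_two_rpow_abs_mul_rpow {a b p : ℝ} (ha : 0 < a) (hab : a ≤ b) (hb : b ≤ 2 * a) :
    a ^ p ≤ 2 ^ |p| * b ^ p := by
  rcases le_or_gt 0 p with hp | hp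
  · calc a ^ p ≤ b ^ p := rpow_le_rpow ha.le hab hp
      _ ≤ 2 ^ |p| * b ^ p :=
        le_mul_of_one_le_left (rpow_nonneg (by linarith) p)
          (one_le_rpow (by norm_num) (abs_nonneg p))
  · calc a ^ p ≤ (b / 2) ^ p := rpow_le_rpow_of_nonpos (by linarith) (by linarith) hp.le
      _ = 2 ^ |p| * b ^ p := by
        rw [div_rpow (by linarith) zero_le_two, abs_of_neg hp, rpow_neg zero_le_two, div_eq_inv_mul]

section RpowMulAddRpow

variable {γ δ : ℝ}

theorem integrableOn_rpow_mul_add_rpow (hγ : -1 < γ) (hγδ : γ + δ < -1) {B : ℝ} (hB : 0 < B) :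
    IntegrableOn (fun x : ℝ => x ^ γ * (x + B) ^ δ) (Set.Ioi 0) := by
  have hδ : δ ≤ 0 := by linarith
  have hcont : ContinuousOn (fun x : ℝ => x ^ γ * (x + B) ^ δ) (Set.Ioi 0) :=
    (continuousOn_id.rpow_const fun x (hx : 0 < x) => Or.inl hx.ne').mul
      ((continuousOn_id.add continuousOn_const).rpow_const fun x (hx : 0 < x) =>
        Or.inl (ne_of_gt (by change 0 < x + B; linarith)))
  rw [← Set.Ioc_union_Ioi_eq_Ioi zero_le_one]
  refine IntegrableOn.union ?_ ?_
  · have hγint : IntegrableOn (fun x : ℝ => x ^ γ) (Set.Ioc 0 1) :=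
      (intervalIntegrable_iff_integrableOn_Ioc_of_le zero_le_one).1
        (intervalIntegral.intervalIntegrable_rpow' hγ)
    refine (hγint.mul_const (B ^ δ)).mono'
      ((hcont.mono Set.Ioc_subset_Ioi_self).aestronglyMeasurable measurableSet_Ioc)
      (ae_restrict_of_forall_mem measurableSet_Ioc fun x hx => ?_)
    rw [norm_of_nonneg (by have := hx.1; positivity)]
    exact mul_le_mul_of_nonneg_left (rpow_le_rpow_of_nonpos hB (by linarith [hx.1]) hδ)
      (rpow_nonneg hx.1.le _)
  · refine (integrableOn_Ioi_rpow_of_lt hγδ zero_lt_one).mono'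
      ((hcont.mono (Set.Ioi_subset_Ioi zero_le_one)).aestronglyMeasurable measurableSet_Ioi)
      (ae_restrict_of_forall_mem measurableSet_Ioi fun x (hx : 1 < x) => ?_)
    have hx0 : 0 < x := by linarith
    rw [norm_of_nonneg (by positivity), rpow_add hx0]
    exact mul_le_mul_of_nonneg_left (rpow_le_rpow_of_nonpos hx0 (by linarith) hδ)
      (rpow_nonneg hx0.le _)

theorem integral_rpow_mul_add_rpow {B : ℝ} (hB : 0 < B) :
    ∫ x in Set.Ioi 0, x ^ γ * (x + B) ^ δ =
      B ^ (γ + δ + 1) * ∫ t in Set.Ioi 0, t ^ γ * (t + 1) ^ δ := by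
  have hscale : ∫ t in Set.Ioi 0, (B * t) ^ γ * (B * t + B) ^ δ =
      B ^ (γ + δ) * ∫ t in Set.Ioi 0, t ^ γ * (t + 1) ^ δ := by
    rw [← integral_const_mul]
    refine setIntegral_congr_fun measurableSet_Ioi fun t (ht : 0 < t) => ?_
    rw [show B * t + B = B * (t + 1) by ring, mul_rpow hB.le ht.le, mul_rpow hB.le (by linarith),
      rpow_add hB]
    ring
  rw [integral_comp_mul_left_Ioi (fun x => x ^ γ * (x + B) ^ δ) 0 hB, mul_zero, smul_eq_mul]
    at hscale
  rw [rpow_add_one hB.ne', mul_right_comm, ← hscale]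
  field_simp

theorem integral_rpow_mul_add_rpow_pos (hγ : -1 < γ) (hγδ : γ + δ < -1) :
    0 < ∫ t in Set.Ioi (0 : ℝ), t ^ γ * (t + 1) ^ δ := by
  have hpos : ∀ t ∈ Set.Ioi (0 : ℝ), 0 < t ^ γ * (t + 1) ^ δ := fun t (ht : 0 < t) => by
    positivity
  rw [setIntegral_pos_iff_support_of_nonneg_ae
    (ae_restrict_of_forall_mem measurableSet_Ioi fun t ht => (hpos t ht).le)
    (integrableOn_rpow_mul_add_rpow hγ hγδ zero_lt_one)]
  have hsub : Set.Ioi (0 : ℝ) ⊆ Function.support (fun t : ℝ => t ^ γ * (t + 1) ^ δ) ∩ Set.Ioi 0 :=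
    fun t ht => ⟨(hpos t ht).ne', ht⟩
  exact (measure_mono hsub).trans_lt' (by simp)

theorem sum_Icc_rpow_mul_add_rpow_le (hγ : -1 < γ) (hγδ : γ + δ < -1) {B : ℝ} (hB : 0 < B)
    (N : ℕ) :
    ∑ n ∈ Icc 1 N, (n : ℝ) ^ γ * ((n : ℝ) + B) ^ δ ≤
      2 ^ (|γ| + |δ|) * ∫ x in Set.Ioi 0, x ^ γ * (x + B) ^ δ := by
  have hint := integrableOn_rpow_mul_add_rpow hγ hγδ hB
  have hnonneg : ∀ x ∈ Set.Ioi (0 : ℝ), 0 ≤ 2 ^ (|γ| + |δ|) * (x ^ γ * (x + B) ^ δ) :=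
    fun x (hx : 0 < x) => by positivity
  rw [← Ico_add_one_right_eq_Icc, ← integral_const_mul]
  calc ∑ n ∈ Ico 1 (N + 1), (n : ℝ) ^ γ * ((n : ℝ) + B) ^ δ
      ≤ ∫ x in ((1 : ℕ) : ℝ)..((N + 1 : ℕ) : ℝ), 2 ^ (|γ| + |δ|) * (x ^ γ * (x + B) ^ δ) := by
        refine sum_Ico_le_integral_of_le (f := fun x => x ^ γ * (x + B) ^ δ)
          (Nat.le_add_left 1 N) (fun i hi x hx => ?_) ((hint.mono_set fun x hx => ?_).const_mul _)
        · have hi : (1 : ℝ) ≤ i := by exact_mod_cast hi.1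
          have hx2 : x ≤ 2 * i := by push_cast at hx; linarith [hx.2]
          rw [rpow_add two_pos, mul_mul_mul_comm]
          exact mul_le_mul (rpow_le_two_rpow_abs_mul_rpow (by linarith) hx.1 hx2)
            (rpow_le_two_rpow_abs_mul_rpow (by linarith) (by linarith [hx.1]) (by linarith))
            (by positivity) (mul_nonneg (by positivity) (rpow_nonneg (by linarith [hx.1]) _))
        · exact lt_of_lt_of_le (by norm_num) (show ((1 : ℕ) : ℝ) ≤ x from hx.1)
    _ = ∫ x in Set.Ioc ((1 : ℕ) : ℝ) ((N + 1 : ℕ) : ℝ), 2 ^ (|γ| + |δ|) * (x ^ γ * (x + B) ^ δ) :=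
        intervalIntegral.integral_of_le (by exact_mod_cast Nat.le_add_left 1 N)
    _ ≤ ∫ x in Set.Ioi 0, 2 ^ (|γ| + |δ|) * (x ^ γ * (x + B) ^ δ) :=
        setIntegral_mono_set (hint.const_mul _)
          (ae_restrict_of_forall_mem measurableSet_Ioi hnonneg)
          (Set.Ioc_subset_Ioi_self.trans (Set.Ioi_subset_Ioi (by norm_num))).eventuallyLE

theorem exists_sum_Icc_rpow_mul_add_rpow_le (hγ : -1 < γ) (hγδ : γ + δ < -1) :
    ∃ D > 0, ∀ B > 0, ∀ N : ℕ,
      ∑ n ∈ Icc 1 N, (n : ℝ) ^ γ * ((n : ℝ) + B) ^ δ ≤ D * B ^ (γ + δ + 1) := by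
  refine ⟨2 ^ (|γ| + |δ|) * ∫ t in Set.Ioi (0 : ℝ), t ^ γ * (t + 1) ^ δ,
    mul_pos (by positivity) (integral_rpow_mul_add_rpow_pos hγ hγδ), fun B hB N => ?_⟩
  calc _ ≤ 2 ^ (|γ| + |δ|) * ∫ x in Set.Ioi 0, x ^ γ * (x + B) ^ δ :=
        sum_Icc_rpow_mul_add_rpow_le hγ hγδ hB N
    _ = _ := by rw [integral_rpow_mul_add_rpow hB]; ring

end RpowMulAddRpow

theorem card_filter_sum_eq_le {m : ℕ} (S : Finset (Fin (m + 1) → ℕ+)) (n : ℕ) :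
    #{u ∈ S | ∑ j, (u j : ℕ) = n} ≤ n ^ m := by
  have hsum (u : Fin (m + 1) → ℕ+) :
      ∑ j, (u j : ℕ) = ∑ j : Fin m, (u j.castSucc : ℕ) + u (Fin.last m) :=
    Fin.sum_univ_castSucc _
  calc #{u ∈ S | ∑ j, (u j : ℕ) = n}
      ≤ #(Fintype.piFinset fun _ : Fin m => range n) := by
        refine card_le_card_of_injOn (fun u j => (u j.castSucc : ℕ)) (fun u hu => ?_)
          (fun u hu v hv huv => ?_)
        · replace hu := (mem_filter.1 hu).2
          refine Fintype.mem_piFinset.2 fun j => mem_range.2 ?_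
          change (u j.castSucc : ℕ) < n
          have := hsum u
          have := single_le_sum (fun i _ => Nat.zero_le (u (Fin.castSucc i) : ℕ)) (mem_univ j)
          have := (u (Fin.last m)).pos
          omega
        · replace hu := (mem_filter.1 hu).2
          replace hv := (mem_filter.1 hv).2
          have hinit : ∀ j : Fin m, u j.castSucc = v j.castSucc := fun j =>
            PNat.coe_injective (congrFun huv j)
          have hlast : u (Fin.last m) = v (Fin.last m) := by
            apply PNat.coe_injective
            rw [hsum] at hu hv
            simp only [hinit] at hu
            omega
          exact funext fun i => Fin.lastCases hlast hinit i
    _ = n ^ m := by simp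

theorem sum_comp_sum_le_sum_Icc {m : ℕ} {g : ℕ → ℝ} (hg : ∀ n, 0 ≤ g n)
    (S : Finset (Fin (m + 1) → ℕ+)) :
    ∑ u ∈ S, g (∑ j, (u j : ℕ)) ≤
      ∑ n ∈ Icc 1 (S.sup fun u => ∑ j, (u j : ℕ)), (n : ℝ) ^ m * g n := by
  rw [sum_comp]
  calc ∑ n ∈ S.image (fun u => ∑ j, (u j : ℕ)), #{u ∈ S | ∑ j, (u j : ℕ) = n} • g n
      ≤ ∑ n ∈ S.image (fun u => ∑ j, (u j : ℕ)), (n : ℝ) ^ m * g n := by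
        refine sum_le_sum fun n _ => ?_
        rw [nsmul_eq_mul]
        gcongr
        · exact hg n
        · exact_mod_cast card_filter_sum_eq_le S n
    _ ≤ _ := by
        refine sum_le_sum_of_subset_of_nonneg (fun n hn => ?_)
          (fun n _ _ => mul_nonneg (by positivity) (hg n))
        obtain ⟨u, hu, rfl⟩ := mem_image.1 hn
        have hpos : 1 ≤ ∑ j, (u j : ℕ) := (u 0).pos.trans_le
          (single_le_sum (f := fun j => (u j : ℕ)) (fun j _ => Nat.zero_le _) (mem_univ 0))
        exact mem_Icc.2 ⟨hpos, le_sup (f := fun u => ∑ j, (u j : ℕ)) hu⟩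

theorem summable_and_tsum_le_of_sum_Icc_le {m : ℕ} {g : ℕ → ℝ} (hg : ∀ n, 0 ≤ g n) {K : ℝ}
    (hK : ∀ N : ℕ, ∑ n ∈ Icc 1 N, (n : ℝ) ^ m * g n ≤ K) :
    Summable (fun u : Fin (m + 1) → ℕ+ => g (∑ j, (u j : ℕ))) ∧
      ∑' u : Fin (m + 1) → ℕ+, g (∑ j, (u j : ℕ)) ≤ K := by
  have hS (S : Finset (Fin (m + 1) → ℕ+)) : ∑ u ∈ S, g (∑ j, (u j : ℕ)) ≤ K :=
    (sum_comp_sum_le_sum_Icc hg S).trans (hK _)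
  exact ⟨summable_of_sum_le (fun u => hg _) hS, Real.tsum_le_of_sum_le (fun u => hg _) hS⟩

/-- For an integer `s ≥ 1` and reals `α₁, α₂` with `-(s+1)/2 < α₁ < -s/2` and `α₂ < -s/2`,
there is `C > 0` (depending only on `s, α₁, α₂`) such that for all `B > 0` the series
`∑_{u ∈ (ℤ₊)^s} (u₁+…+u_s)^{α₁} (u₁+…+u_s+B)^{α₂}` converges and is bounded by
`C·B^{α₁+α₂+s}`. -/
theorem stmt_14 (s : ℕ) (hs : 1 ≤ s) (α₁ α₂ : ℝ)
    (h0 : -((s : ℝ) + 1)/2 < α₁) (h1 : α₁ < -(s : ℝ)/2) (h2 : α₂ < -(s : ℝ)/2) :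
    ∃ C : ℝ, 0 < C ∧ ∀ B : ℝ, 0 < B →
      Summable (fun u : Fin s → ℕ+ =>
        (∑ j, (u j : ℝ)) ^ α₁ * ((∑ j, (u j : ℝ)) + B) ^ α₂) ∧
      ∑' u : Fin s → ℕ+, (∑ j, (u j : ℝ)) ^ α₁ * ((∑ j, (u j : ℝ)) + B) ^ α₂
        ≤ C * B ^ (α₁ + α₂ + s) := by
  obtain ⟨m, rfl⟩ : ∃ m, s = m + 1 := ⟨s - 1, by omega⟩
  push_cast at h0 h1 h2 ⊢
  obtain ⟨D, hD, hbound⟩ := exists_sum_Icc_rpow_mul_add_rpow_le (γ := m + α₁) (δ := α₂)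
    (by linarith) (by linarith)
  refine ⟨D, hD, fun B hB => ?_⟩
  have hg (n : ℕ) : 0 ≤ (n : ℝ) ^ α₁ * ((n : ℝ) + B) ^ α₂ := by positivity
  have key := summable_and_tsum_le_of_sum_Icc_le hg (K := D * B ^ (α₁ + α₂ + (m + 1))) fun N => by
    rw [show α₁ + α₂ + (m + 1) = m + α₁ + α₂ + 1 by ring]
    refine le_of_eq_of_le (sum_congr rfl fun n hn => ?_) (hbound B hB N)
    rw [rpow_add (by exact_mod_cast (mem_Icc.1 hn).1), rpow_natCast, mul_assoc]
  exact_mod_cast key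
end

section
/- Let k₁, k₂ ≥ 1 be integers, let a^(1): (ℤ₊)^{k₁} → ℝ and a^(2): (ℤ₊)^{k₂} → ℝ be finitely supported functions, each symmetric (invariant under every permutation of its arguments), and let ε: ℤ₊ → ℝ be any function. Then (∑'_{i ∈ (ℤ₊)^{k₁}} a^(1)(i₁,…,i_{k₁}) ∏_{p=1}^{k₁} ε(i_p)) · (∑'_{i ∈ (ℤ₊)^{k₂}} a^(2)(i₁,…,i_{k₂}) ∏_{p=1}^{k₂} ε(i_p)) = ∑_{r=0}^{min(k₁,k₂)} r!·C(k₁,r)·C(k₂,r) · ∑'_{(u,i) ∈ (ℤ₊)^{k₁+k₂-r}} a^(1)(u₁,…,u_r, i₁,…,i_{k₁-r})·a^(2)(u₁,…,u_r, i_{k₁-r+1},…,i_{k₁+k₂-2r}) · ∏_{q=1}^{r} ε(u_q)² · ∏_{p=1}^{k₁+k₂-2r} ε(i_p), where ∑' denotes summation over tuples whose coordinates are pairwise distinct (in the right-hand side, all k₁+k₂-r coordinates of the combined tuple (u₁,…,u_r,i₁,…,i_{k₁+k₂-2r}) are pairwise distinct), and C(n,r) is the binomial coefficient. -/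
open Finset Function

section Aux

noncomputable def enumF (k : ℕ) (A : Finset ℕ+) (h : A.card = k) : Fin k → ℕ+ :=
  fun p => (A.orderIsoOfFin h p : ℕ+)

lemma enumF_mem {k : ℕ} {A : Finset ℕ+} (h : A.card = k) (p : Fin k) :
    enumF k A h p ∈ A := (A.orderIsoOfFin h p).2

lemma enumF_injective {k : ℕ} {A : Finset ℕ+} (h : A.card = k) :
    Function.Injective (enumF k A h) := fun p q hpq =>
  (A.orderIsoOfFin h).injective (Subtype.ext hpq)

lemma image_enumF {k : ℕ} {A : Finset ℕ+} (h : A.card = k) :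
    Finset.image (enumF k A h) Finset.univ = A := by
  apply Finset.eq_of_subset_of_card_le
  · intro x hx
    obtain ⟨p, -, rfl⟩ := Finset.mem_image.mp hx
    exact (A.orderIsoOfFin h p).2
  · rw [h, Finset.card_image_of_injective _ (enumF_injective h), Finset.card_univ,
      Fintype.card_fin]

lemma exists_perm {k : ℕ} (A : Finset ℕ+) (h : A.card = k) (i : Fin k → ℕ+)
    (hi : Function.Injective i) (him : Finset.image i Finset.univ = A) :
    ∃ σ : Equiv.Perm (Fin k), i = enumF k A h ∘ σ := by
  have hr : Set.range i = (A : Set ℕ+) := by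
    rw [← him, Finset.coe_image, Finset.coe_univ, Set.image_univ]
  refine ⟨(Equiv.ofInjective i hi).trans ((Equiv.setCongr hr).trans
    (A.orderIsoOfFin h).toEquiv.symm), ?_⟩
  funext p
  show _ = ((A.orderIsoOfFin h) ((A.orderIsoOfFin h).toEquiv.symm ((Equiv.setCongr hr) (Equiv.ofInjective i hi p))) : ℕ+)
  rw [show ((A.orderIsoOfFin h).toEquiv.symm : A → Fin _) = (A.orderIsoOfFin h).symm from rfl,
    OrderIso.apply_symm_apply]
  rfl

lemma sym_canon {k : ℕ} (b : (Fin k → ℕ+) → ℝ)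
    (hsym : ∀ σ : Equiv.Perm (Fin k), ∀ v : Fin k → ℕ+, b (v ∘ σ) = b v)
    {A : Finset ℕ+} (h : A.card = k) {i : Fin k → ℕ+}
    (hi : Function.Injective i) (him : Finset.image i Finset.univ = A) :
    b i = b (enumF k A h) := by
  obtain ⟨σ, rfl⟩ := exists_perm A h i hi him
  exact hsym σ _

lemma prod_image_eq {k : ℕ} (i : Fin k → ℕ+) (hi : Function.Injective i) (F : ℕ+ → ℝ) :
    ∏ x ∈ Finset.image i Finset.univ, F x = ∏ p, F (i p) :=
  Finset.prod_image (fun x _ y _ hxy => hi hxy)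

lemma image_comp_equiv {α β γ : Type*} [DecidableEq γ] [DecidableEq β] [Fintype α] [Fintype β]
    (f : β → γ) (e : α ≃ β) :
    Finset.image (f ∘ e) Finset.univ = Finset.image f Finset.univ := by
  rw [← Finset.image_image, Finset.image_univ_equiv]

-- append lemmas
lemma append_inj_left {m n : ℕ} {f : Fin m → ℕ+} {g : Fin n → ℕ+}
    (h : Function.Injective (Fin.append f g)) : Function.Injective f := by
  intro p q hpq
  have := h (a₁ := Fin.castAdd n p) (a₂ := Fin.castAdd n q) (by
    simpa [Fin.append_left] using hpq)
  exact Fin.castAdd_injective _ _ this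

lemma append_inj_right {m n : ℕ} {f : Fin m → ℕ+} {g : Fin n → ℕ+}
    (h : Function.Injective (Fin.append f g)) : Function.Injective g := by
  intro p q hpq
  have := h (a₁ := Fin.natAdd m p) (a₂ := Fin.natAdd m q) (by
    simpa [Fin.append_right] using hpq)
  have hv := congrArg Fin.val this
  simp only [Fin.coe_natAdd] at hv
  exact Fin.ext (by omega)

lemma append_inj_ne {m n : ℕ} {f : Fin m → ℕ+} {g : Fin n → ℕ+}
    (h : Function.Injective (Fin.append f g)) (p : Fin m) (q : Fin n) : f p ≠ g q := by
  intro hpq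
  have := h (a₁ := Fin.castAdd n p) (a₂ := Fin.natAdd m q) (by
    simp [Fin.append_left, Fin.append_right, hpq])
  have hv := congrArg Fin.val this
  simp [Fin.coe_castAdd, Fin.coe_natAdd] at hv
  omega

lemma append_inj_of {m n : ℕ} {f : Fin m → ℕ+} {g : Fin n → ℕ+}
    (hf : Function.Injective f) (hg : Function.Injective g)
    (hfg : ∀ p q, f p ≠ g q) : Function.Injective (Fin.append f g) := by
  intro x y hxy
  induction x using Fin.addCases with
  | left p =>
    induction y using Fin.addCases with
    | left q =>
      rw [Fin.append_left, Fin.append_left] at hxy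
      rw [hf hxy]
    | right q =>
      rw [Fin.append_left, Fin.append_right] at hxy
      exact absurd hxy (hfg p q)
  | right p =>
    induction y using Fin.addCases with
    | left q =>
      rw [Fin.append_right, Fin.append_left] at hxy
      exact absurd hxy.symm (hfg q p)
    | right q =>
      rw [Fin.append_right, Fin.append_right] at hxy
      rw [hg hxy]

lemma image_append {m n : ℕ} (f : Fin m → ℕ+) (g : Fin n → ℕ+) :
    Finset.image (Fin.append f g) Finset.univ
      = Finset.image f Finset.univ ∪ Finset.image g Finset.univ := by
  ext x
  simp only [Finset.mem_image, Finset.mem_union, Finset.mem_univ, true_and]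
  constructor
  · rintro ⟨p, hp⟩
    induction p using Fin.addCases with
    | left p => rw [Fin.append_left] at hp; exact Or.inl ⟨p, hp⟩
    | right p => rw [Fin.append_right] at hp; exact Or.inr ⟨p, hp⟩
  · rintro (⟨p, hp⟩ | ⟨p, hp⟩)
    · exact ⟨Fin.castAdd n p, by rw [Fin.append_left]; exact hp⟩
    · exact ⟨Fin.natAdd m p, by rw [Fin.append_right]; exact hp⟩

end Aux

noncomputable def GS (k : ℕ) (b : (Fin k → ℕ+) → ℝ) (ε : ℕ+ → ℝ) (A : Finset ℕ+) : ℝ :=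
  if h : A.card = k then b (enumF k A h) * ∏ x ∈ A, ε x else 0

lemma factorL (k : ℕ) (b : (Fin k → ℕ+) → ℝ) (hfin : (Function.support b).Finite)
    (hsym : ∀ σ : Equiv.Perm (Fin k), ∀ v : Fin k → ℕ+, b (v ∘ σ) = b v)
    (ε : ℕ+ → ℝ) (T : Finset ℕ+) (hT : ∀ i ∈ Function.support b, ∀ p, i p ∈ T) :
    (∑' i : {i : Fin k → ℕ+ // Function.Injective i}, b i.1 * ∏ p, ε (i.1 p))
    = (k.factorial : ℝ) *
      ∑ A ∈ T.powerset.filter (fun A => A.card = k), GS k b ε A := by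
  classical
  have hNfin : {x : {i : Fin k → ℕ+ // Function.Injective i} | b x.1 ≠ 0}.Finite := by
    have : {x : {i : Fin k → ℕ+ // Function.Injective i} | b x.1 ≠ 0}
        = Subtype.val ⁻¹' (Function.support b) := rfl
    rw [this]
    exact hfin.preimage (Subtype.val_injective.injOn)
  have htsum : (∑' i : {i : Fin k → ℕ+ // Function.Injective i}, b i.1 * ∏ p, ε (i.1 p))
      = ∑ x ∈ hNfin.toFinset, b x.1 * ∏ p, ε (x.1 p) := by
    refine tsum_eq_sum (fun x hx => ?_)
    have : b x.1 = 0 := by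
      by_contra hb
      exact hx (hNfin.mem_toFinset.mpr hb)
    rw [this, zero_mul]
  rw [htsum]
  have hmaps : ∀ x ∈ hNfin.toFinset, Finset.image x.1 Finset.univ ∈
      T.powerset.filter (fun A => A.card = k) := by
    intro x hx
    rw [Finset.mem_filter, Finset.mem_powerset]
    constructor
    · intro y hy
      obtain ⟨p, -, rfl⟩ := Finset.mem_image.mp hy
      exact hT x.1 (hNfin.mem_toFinset.mp hx) p
    · rw [Finset.card_image_of_injective _ x.2, Finset.card_univ, Fintype.card_fin]
  rw [← Finset.sum_fiberwise_of_maps_to hmaps, Finset.mul_sum]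
  refine Finset.sum_congr rfl (fun A hA => ?_)
  have hAk : A.card = k := (Finset.mem_filter.mp hA).2
  by_cases hb : b (enumF k A hAk) = 0
  · have hempty : hNfin.toFinset.filter (fun x => Finset.image x.1 Finset.univ = A) = ∅ := by
      refine Finset.filter_eq_empty_iff.mpr (fun x hx => ?_)
      intro him
      have : b x.1 = b (enumF k A hAk) := sym_canon b hsym hAk x.2 him
      exact (hNfin.mem_toFinset.mp hx) (this.trans hb)
    rw [hempty, Finset.sum_empty, GS, dif_pos hAk, hb, zero_mul, mul_zero]
  · have hconst : ∀ x ∈ hNfin.toFinset.filter (fun x => Finset.image x.1 Finset.univ = A),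
        b x.1 * ∏ p, ε (x.1 p) = GS k b ε A := by
      intro x hx
      obtain ⟨-, him⟩ := Finset.mem_filter.mp hx
      rw [GS, dif_pos hAk, ← sym_canon b hsym hAk x.2 him, ← him, prod_image_eq x.1 x.2]
    rw [Finset.sum_congr rfl hconst, Finset.sum_const, nsmul_eq_mul]
    congr 1
    have : (hNfin.toFinset.filter (fun x => Finset.image x.1 Finset.univ = A)).card
        = (Finset.univ : Finset (Equiv.Perm (Fin k))).card := by
      refine (Finset.card_bij
        (fun (σ : Equiv.Perm (Fin k)) _ => (⟨enumF k A hAk ∘ σ, (enumF_injective hAk).comp (Equiv.injective σ)⟩ :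
          {i : Fin k → ℕ+ // Function.Injective i})) ?_ ?_ ?_).symm
      · intro σ _
        rw [Finset.mem_filter]
        refine ⟨hNfin.mem_toFinset.mpr ?_, ?_⟩
        · show b (enumF k A hAk ∘ σ) ≠ 0
          rw [hsym σ]
          exact hb
        · show Finset.image (enumF k A hAk ∘ σ) Finset.univ = A
          rw [image_comp_equiv, image_enumF]
      · intro σ _ τ _ h
        have hfun := congrArg Subtype.val h
        exact Equiv.ext (fun p => enumF_injective hAk (congrFun hfun p))
      · intro x hx
        obtain ⟨hxN, him⟩ := Finset.mem_filter.mp hx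
        obtain ⟨σ, hσ⟩ := exists_perm A hAk x.1 x.2 him
        exact ⟨σ, Finset.mem_univ σ, Subtype.ext hσ.symm⟩
    rw [this]
    simp [Fintype.card_perm]

noncomputable def Gtriple (k₁ k₂ : ℕ) (a1 : (Fin k₁ → ℕ+) → ℝ) (a2 : (Fin k₂ → ℕ+) → ℝ)
    (ε : ℕ+ → ℝ) (t : Finset ℕ+ × Finset ℕ+ × Finset ℕ+) : ℝ :=
  if h : (t.1 ∪ t.2.1).card = k₁ ∧ (t.1 ∪ t.2.2).card = k₂ then
    a1 (enumF k₁ _ h.1) * a2 (enumF k₂ _ h.2) * (∏ x ∈ t.1, (ε x) ^ 2) *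
      (∏ x ∈ t.2.1, ε x) * ∏ x ∈ t.2.2, ε x
  else 0

def TriSet (T : Finset ℕ+) (r m₁ m₂ : ℕ) : Finset (Finset ℕ+ × Finset ℕ+ × Finset ℕ+) :=
  (T.powerset ×ˢ T.powerset ×ˢ T.powerset).filter (fun t =>
    t.1.card = r ∧ t.2.1.card = m₁ ∧ t.2.2.card = m₂ ∧
    Disjoint t.1 t.2.1 ∧ Disjoint t.1 t.2.2 ∧ Disjoint t.2.1 t.2.2)

lemma factorW (k₁ k₂ r m₁ m₂ : ℕ) (e₁ : k₁ = r + m₁) (e₂ : k₂ = r + m₂)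
    (a1 : (Fin k₁ → ℕ+) → ℝ) (a2 : (Fin k₂ → ℕ+) → ℝ)
    (hfin1 : (Function.support a1).Finite) (hfin2 : (Function.support a2).Finite)
    (hsym1 : ∀ σ : Equiv.Perm (Fin k₁), ∀ v : Fin k₁ → ℕ+, a1 (v ∘ σ) = a1 v)
    (hsym2 : ∀ σ : Equiv.Perm (Fin k₂), ∀ v : Fin k₂ → ℕ+, a2 (v ∘ σ) = a2 v)
    (ε : ℕ+ → ℝ) (T : Finset ℕ+)
    (hT1 : ∀ i ∈ Function.support a1, ∀ p, i p ∈ T)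
    (hT2 : ∀ i ∈ Function.support a2, ∀ p, i p ∈ T) :
    (∑' w : {w : (Fin r → ℕ+) × (Fin (m₁ + m₂) → ℕ+) //
          Function.Injective (Fin.append w.1 w.2)},
        a1 (fun q => Fin.append w.1.1 (fun j : Fin m₁ => w.1.2 (Fin.castAdd m₂ j))
            (Fin.cast e₁ q)) *
        a2 (fun q => Fin.append w.1.1 (fun j : Fin m₂ => w.1.2 (Fin.natAdd m₁ j))
            (Fin.cast e₂ q)) *
        (∏ q : Fin r, (ε (w.1.1 q)) ^ 2) * ∏ p : Fin (m₁ + m₂), ε (w.1.2 p))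
    = ((r.factorial * m₁.factorial * m₂.factorial : ℕ) : ℝ) *
      ∑ t ∈ TriSet T r m₁ m₂, Gtriple k₁ k₂ a1 a2 ε t := by
  classical
  -- abbreviations
  set W := {w : (Fin r → ℕ+) × (Fin (m₁ + m₂) → ℕ+) //
      Function.Injective (Fin.append w.1 w.2)} with hW
  let c₁ : W → Fin k₁ → ℕ+ := fun w q =>
    Fin.append w.1.1 (fun j : Fin m₁ => w.1.2 (Fin.castAdd m₂ j)) (Fin.cast e₁ q)
  let c₂ : W → Fin k₂ → ℕ+ := fun w q =>
    Fin.append w.1.1 (fun j : Fin m₂ => w.1.2 (Fin.natAdd m₁ j)) (Fin.cast e₂ q)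
  have hc₁app : ∀ (w : W) (x : Fin (r + m₁)),
      c₁ w (Fin.cast e₁.symm x) = Fin.append w.1.1
        (fun j : Fin m₁ => w.1.2 (Fin.castAdd m₂ j)) x := fun w x => rfl
  have hc₂app : ∀ (w : W) (x : Fin (r + m₂)),
      c₂ w (Fin.cast e₂.symm x) = Fin.append w.1.1
        (fun j : Fin m₂ => w.1.2 (Fin.natAdd m₁ j)) x := fun w x => rfl
  -- basic injectivity facts
  have hv₁inj : ∀ w : W, Function.Injective (fun j : Fin m₁ => w.1.2 (Fin.castAdd m₂ j)) := by
    intro w p q hpq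
    exact Fin.castAdd_injective _ _ ((append_inj_right w.2) hpq)
  have hv₂inj : ∀ w : W, Function.Injective (fun j : Fin m₂ => w.1.2 (Fin.natAdd m₁ j)) := by
    intro w p q hpq
    have := (append_inj_right w.2) hpq
    have hv := congrArg Fin.val this
    simp only [Fin.coe_natAdd] at hv
    exact Fin.ext (by omega)
  have huv₁ : ∀ (w : W) (p : Fin r) (q : Fin m₁),
      w.1.1 p ≠ w.1.2 (Fin.castAdd m₂ q) := fun w p q =>
    append_inj_ne w.2 p (Fin.castAdd m₂ q)
  have huv₂ : ∀ (w : W) (p : Fin r) (q : Fin m₂),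
      w.1.1 p ≠ w.1.2 (Fin.natAdd m₁ q) := fun w p q =>
    append_inj_ne w.2 p (Fin.natAdd m₁ q)
  have hv₁v₂ : ∀ (w : W) (p : Fin m₁) (q : Fin m₂),
      w.1.2 (Fin.castAdd m₂ p) ≠ w.1.2 (Fin.natAdd m₁ q) := by
    intro w p q h
    have := (append_inj_right w.2) h
    have hv := congrArg Fin.val this
    simp only [Fin.coe_castAdd, Fin.coe_natAdd] at hv
    have := p.2
    omega
  have hc₁inj : ∀ w : W, Function.Injective (c₁ w) := by
    intro w
    have : Function.Injective (Fin.append w.1.1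
        (fun j : Fin m₁ => w.1.2 (Fin.castAdd m₂ j))) :=
      append_inj_of (append_inj_left w.2) (hv₁inj w) (huv₁ w)
    exact this.comp (Fin.cast_injective e₁)
  have hc₂inj : ∀ w : W, Function.Injective (c₂ w) := by
    intro w
    have : Function.Injective (Fin.append w.1.1
        (fun j : Fin m₂ => w.1.2 (Fin.natAdd m₁ j))) :=
      append_inj_of (append_inj_left w.2) (hv₂inj w) (huv₂ w)
    exact this.comp (Fin.cast_injective e₂)
  have himc₁ : ∀ w : W, Finset.image (c₁ w) Finset.univ
      = Finset.image w.1.1 Finset.univ ∪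
        Finset.image (fun j : Fin m₁ => w.1.2 (Fin.castAdd m₂ j)) Finset.univ := by
    intro w
    have h1 : c₁ w = (Fin.append w.1.1 (fun j : Fin m₁ => w.1.2 (Fin.castAdd m₂ j))) ∘
        (finCongr e₁) := rfl
    rw [h1, image_comp_equiv, image_append]
  have himc₂ : ∀ w : W, Finset.image (c₂ w) Finset.univ
      = Finset.image w.1.1 Finset.univ ∪
        Finset.image (fun j : Fin m₂ => w.1.2 (Fin.natAdd m₁ j)) Finset.univ := by
    intro w
    have h1 : c₂ w = (Fin.append w.1.1 (fun j : Fin m₂ => w.1.2 (Fin.natAdd m₁ j))) ∘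
        (finCongr e₂) := rfl
    rw [h1, image_comp_equiv, image_append]
  -- injectivity of w ↦ (c₁ w, c₂ w)
  have hΦinj : Function.Injective (fun w : W => (c₁ w, c₂ w)) := by
    intro w w' h
    have h1 : c₁ w = c₁ w' := congrArg Prod.fst h
    have h2 : c₂ w = c₂ w' := congrArg Prod.snd h
    apply Subtype.ext
    apply Prod.ext
    · funext q
      have := congrFun h1 (Fin.cast e₁.symm (Fin.castAdd m₁ q))
      rwa [hc₁app w, hc₁app w', Fin.append_left, Fin.append_left] at this
    · funext p
      induction p using Fin.addCases with
      | left j =>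
        have := congrFun h1 (Fin.cast e₁.symm (Fin.natAdd r j))
        rwa [hc₁app w, hc₁app w', Fin.append_right, Fin.append_right] at this
      | right j =>
        have := congrFun h2 (Fin.cast e₂.symm (Fin.natAdd r j))
        rwa [hc₂app w, hc₂app w', Fin.append_right, Fin.append_right] at this
  have hNfin : {w : W | a1 (c₁ w) ≠ 0 ∧ a2 (c₂ w) ≠ 0}.Finite := by
    have heq : {w : W | a1 (c₁ w) ≠ 0 ∧ a2 (c₂ w) ≠ 0}
        = (fun w : W => (c₁ w, c₂ w)) ⁻¹'
          ((Function.support a1) ×ˢ (Function.support a2)) := rfl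
    rw [heq]
    exact (hfin1.prod hfin2).preimage (hΦinj.injOn)
  have htsum : (∑' w : W,
        a1 (fun q => Fin.append w.1.1 (fun j : Fin m₁ => w.1.2 (Fin.castAdd m₂ j))
            (Fin.cast e₁ q)) *
        a2 (fun q => Fin.append w.1.1 (fun j : Fin m₂ => w.1.2 (Fin.natAdd m₁ j))
            (Fin.cast e₂ q)) *
        (∏ q : Fin r, (ε (w.1.1 q)) ^ 2) * ∏ p : Fin (m₁ + m₂), ε (w.1.2 p))
      = ∑ w ∈ hNfin.toFinset,
        a1 (c₁ w) * a2 (c₂ w) *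
        (∏ q : Fin r, (ε (w.1.1 q)) ^ 2) * ∏ p : Fin (m₁ + m₂), ε (w.1.2 p) := by
    refine tsum_eq_sum (fun w hw => ?_)
    have hw' : ¬ (a1 (c₁ w) ≠ 0 ∧ a2 (c₂ w) ≠ 0) := by
      intro hcontra
      exact hw (hNfin.mem_toFinset.mpr hcontra)
    rw [not_and_or, not_not, not_not] at hw'
    rcases hw' with h | h
    · rw [show (fun q => Fin.append w.1.1 (fun j : Fin m₁ => w.1.2 (Fin.castAdd m₂ j))
          (Fin.cast e₁ q)) = c₁ w from rfl, h, zero_mul, zero_mul, zero_mul]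
    · rw [show (fun q => Fin.append w.1.1 (fun j : Fin m₂ => w.1.2 (Fin.natAdd m₁ j))
          (Fin.cast e₂ q)) = c₂ w from rfl, h, mul_zero, zero_mul, zero_mul]
  rw [htsum]
  -- the fiber map
  let g' : W → Finset ℕ+ × Finset ℕ+ × Finset ℕ+ := fun w =>
    (Finset.image w.1.1 Finset.univ,
     Finset.image (fun j : Fin m₁ => w.1.2 (Fin.castAdd m₂ j)) Finset.univ,
     Finset.image (fun j : Fin m₂ => w.1.2 (Fin.natAdd m₁ j)) Finset.univ)
  have hmaps : ∀ w ∈ hNfin.toFinset, g' w ∈ TriSet T r m₁ m₂ := by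
    intro w hw
    obtain ⟨ha1, ha2⟩ := hNfin.mem_toFinset.mp hw
    rw [TriSet, Finset.mem_filter]
    constructor
    · rw [Finset.mem_product, Finset.mem_product]
      refine ⟨?_, ?_, ?_⟩ <;> rw [Finset.mem_powerset] <;> intro x hx <;>
        obtain ⟨p, -, rfl⟩ := Finset.mem_image.mp hx
      · have : w.1.1 p = c₁ w (Fin.cast e₁.symm (Fin.castAdd m₁ p)) := by
          rw [hc₁app w, Fin.append_left]
        rw [this]
        exact hT1 (c₁ w) ha1 _
      · have : w.1.2 (Fin.castAdd m₂ p) = c₁ w (Fin.cast e₁.symm (Fin.natAdd r p)) := by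
          rw [hc₁app w, Fin.append_right]
        rw [this]
        exact hT1 (c₁ w) ha1 _
      · have : w.1.2 (Fin.natAdd m₁ p) = c₂ w (Fin.cast e₂.symm (Fin.natAdd r p)) := by
          rw [hc₂app w, Fin.append_right]
        rw [this]
        exact hT2 (c₂ w) ha2 _
    · refine ⟨?_, ?_, ?_, ?_, ?_, ?_⟩
      · rw [Finset.card_image_of_injective _ (append_inj_left w.2), Finset.card_univ,
          Fintype.card_fin]
      · rw [Finset.card_image_of_injective _ (hv₁inj w), Finset.card_univ, Fintype.card_fin]
      · rw [Finset.card_image_of_injective _ (hv₂inj w), Finset.card_univ, Fintype.card_fin]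
      · rw [Finset.disjoint_left]
        intro x hx hx'
        obtain ⟨p, -, rfl⟩ := Finset.mem_image.mp hx
        obtain ⟨q, -, hq⟩ := Finset.mem_image.mp hx'
        exact huv₁ w p q hq.symm
      · rw [Finset.disjoint_left]
        intro x hx hx'
        obtain ⟨p, -, rfl⟩ := Finset.mem_image.mp hx
        obtain ⟨q, -, hq⟩ := Finset.mem_image.mp hx'
        exact huv₂ w p q hq.symm
      · rw [Finset.disjoint_left]
        intro x hx hx'
        obtain ⟨p, -, rfl⟩ := Finset.mem_image.mp hx
        obtain ⟨q, -, hq⟩ := Finset.mem_image.mp hx'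
        exact hv₁v₂ w p q hq.symm
  rw [← Finset.sum_fiberwise_of_maps_to hmaps, Finset.mul_sum]
  refine Finset.sum_congr rfl (fun t ht => ?_)
  obtain ⟨htpow, hU, hV₁, hV₂, hdUV₁, hdUV₂, hdV₁V₂⟩ := Finset.mem_filter.mp ht
  have hcond : (t.1 ∪ t.2.1).card = k₁ ∧ (t.1 ∪ t.2.2).card = k₂ := by
    constructor
    · rw [Finset.card_union_of_disjoint hdUV₁, hU, hV₁]
      omega
    · rw [Finset.card_union_of_disjoint hdUV₂, hU, hV₂]
      omega
  -- image equalities for fiber members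
  have hfib_img : ∀ w ∈ hNfin.toFinset.filter (fun w => g' w = t),
      Finset.image w.1.1 Finset.univ = t.1 ∧
      Finset.image (fun j : Fin m₁ => w.1.2 (Fin.castAdd m₂ j)) Finset.univ = t.2.1 ∧
      Finset.image (fun j : Fin m₂ => w.1.2 (Fin.natAdd m₁ j)) Finset.univ = t.2.2 := by
    intro w hw
    obtain ⟨-, hg⟩ := Finset.mem_filter.mp hw
    exact ⟨congrArg Prod.fst hg, congrArg (Prod.fst ∘ Prod.snd) hg,
      congrArg (Prod.snd ∘ Prod.snd) hg⟩
  by_cases hz : a1 (enumF k₁ (t.1 ∪ t.2.1) hcond.1) = 0 ∨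
      a2 (enumF k₂ (t.1 ∪ t.2.2) hcond.2) = 0
  · have hempty : hNfin.toFinset.filter (fun w => g' w = t) = ∅ := by
      refine Finset.filter_eq_empty_iff.mpr (fun w hw => ?_)
      intro hg
      obtain ⟨ha1, ha2⟩ := hNfin.mem_toFinset.mp hw
      have himg := hfib_img w (Finset.mem_filter.mpr ⟨hw, hg⟩)
      have him1 : Finset.image (c₁ w) Finset.univ = t.1 ∪ t.2.1 := by
        rw [himc₁ w, himg.1, himg.2.1]
      have him2 : Finset.image (c₂ w) Finset.univ = t.1 ∪ t.2.2 := by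
        rw [himc₂ w, himg.1, himg.2.2]
      rcases hz with h | h
      · exact ha1 ((sym_canon a1 hsym1 hcond.1 (hc₁inj w) him1).trans h)
      · exact ha2 ((sym_canon a2 hsym2 hcond.2 (hc₂inj w) him2).trans h)
    rw [hempty, Finset.sum_empty, Gtriple, dif_pos hcond]
    rcases hz with h | h
    · rw [h, zero_mul, zero_mul, zero_mul, zero_mul, mul_zero]
    · rw [h, mul_zero, zero_mul, zero_mul, zero_mul, mul_zero]
  · push_neg at hz
    obtain ⟨hz1, hz2⟩ := hz
    have hconst : ∀ w ∈ hNfin.toFinset.filter (fun w => g' w = t),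
        a1 (c₁ w) * a2 (c₂ w) *
        (∏ q : Fin r, (ε (w.1.1 q)) ^ 2) * (∏ p : Fin (m₁ + m₂), ε (w.1.2 p))
        = Gtriple k₁ k₂ a1 a2 ε t := by
      intro w hw
      have himg := hfib_img w hw
      have him1 : Finset.image (c₁ w) Finset.univ = t.1 ∪ t.2.1 := by
        rw [himc₁ w, himg.1, himg.2.1]
      have him2 : Finset.image (c₂ w) Finset.univ = t.1 ∪ t.2.2 := by
        rw [himc₂ w, himg.1, himg.2.2]
      have e1 : a1 (c₁ w) = a1 (enumF k₁ (t.1 ∪ t.2.1) hcond.1) :=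
        sym_canon a1 hsym1 hcond.1 (hc₁inj w) him1
      have e2 : a2 (c₂ w) = a2 (enumF k₂ (t.1 ∪ t.2.2) hcond.2) :=
        sym_canon a2 hsym2 hcond.2 (hc₂inj w) him2
      have e3 : (∏ q : Fin r, (ε (w.1.1 q)) ^ 2) = ∏ x ∈ t.1, (ε x) ^ 2 := by
        rw [← himg.1, prod_image_eq w.1.1 (append_inj_left w.2)]
      have e4 : (∏ p : Fin (m₁ + m₂), ε (w.1.2 p))
          = (∏ x ∈ t.2.1, ε x) * ∏ x ∈ t.2.2, ε x := by
        rw [Fin.prod_univ_add (f := fun p => ε (w.1.2 p)), ← himg.2.1, ← himg.2.2,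
          prod_image_eq _ (hv₁inj w), prod_image_eq _ (hv₂inj w)]
      rw [e1, e2, e3, e4, Gtriple, dif_pos hcond]
      ring
    rw [Finset.sum_congr rfl hconst, Finset.sum_const, nsmul_eq_mul]
    congr 1
    have hcard : (hNfin.toFinset.filter (fun w => g' w = t)).card
        = (Finset.univ : Finset (Equiv.Perm (Fin r) × Equiv.Perm (Fin m₁) ×
            Equiv.Perm (Fin m₂))).card := by
      have hbinj : ∀ σ : Equiv.Perm (Fin r) × Equiv.Perm (Fin m₁) × Equiv.Perm (Fin m₂),
          Function.Injective (Fin.append (enumF r t.1 hU ∘ σ.1)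
            (Fin.append (enumF m₁ t.2.1 hV₁ ∘ σ.2.1) (enumF m₂ t.2.2 hV₂ ∘ σ.2.2))) := by
        intro σ
        apply append_inj_of
        · exact (enumF_injective hU).comp (Equiv.injective σ.1)
        · apply append_inj_of
          · exact (enumF_injective hV₁).comp (Equiv.injective σ.2.1)
          · exact (enumF_injective hV₂).comp (Equiv.injective σ.2.2)
          · intro p q h
            refine Finset.disjoint_left.mp hdV₁V₂ (enumF_mem hV₁ (σ.2.1 p)) ?_
            rw [show enumF m₁ t.2.1 hV₁ (σ.2.1 p) = enumF m₂ t.2.2 hV₂ (σ.2.2 q) from h]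
            exact enumF_mem hV₂ (σ.2.2 q)
        · intro p q
          induction q using Fin.addCases with
          | left j =>
            rw [Fin.append_left]
            intro h
            refine Finset.disjoint_left.mp hdUV₁ (enumF_mem hU (σ.1 p)) ?_
            rw [show enumF r t.1 hU (σ.1 p) = enumF m₁ t.2.1 hV₁ (σ.2.1 j) from h]
            exact enumF_mem hV₁ (σ.2.1 j)
          | right j =>
            rw [Fin.append_right]
            intro h
            refine Finset.disjoint_left.mp hdUV₂ (enumF_mem hU (σ.1 p)) ?_
            rw [show enumF r t.1 hU (σ.1 p) = enumF m₂ t.2.2 hV₂ (σ.2.2 j) from h]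
            exact enumF_mem hV₂ (σ.2.2 j)
      refine (Finset.card_bij
        (fun (σ : Equiv.Perm (Fin r) × Equiv.Perm (Fin m₁) × Equiv.Perm (Fin m₂)) _ =>
          (⟨(enumF r t.1 hU ∘ σ.1,
             Fin.append (enumF m₁ t.2.1 hV₁ ∘ σ.2.1) (enumF m₂ t.2.2 hV₂ ∘ σ.2.2)),
            hbinj σ⟩ : W)) ?_ ?_ ?_).symm
      · intro σ _
        have himu : Finset.image (enumF r t.1 hU ∘ σ.1) Finset.univ = t.1 := by
          rw [image_comp_equiv, image_enumF]
        have hb₁ : (fun j : Fin m₁ =>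
            (Fin.append (enumF m₁ t.2.1 hV₁ ∘ σ.2.1) (enumF m₂ t.2.2 hV₂ ∘ σ.2.2))
              (Fin.castAdd m₂ j)) = enumF m₁ t.2.1 hV₁ ∘ σ.2.1 := by
          funext j
          exact Fin.append_left _ _ j
        have hb₂ : (fun j : Fin m₂ =>
            (Fin.append (enumF m₁ t.2.1 hV₁ ∘ σ.2.1) (enumF m₂ t.2.2 hV₂ ∘ σ.2.2))
              (Fin.natAdd m₁ j)) = enumF m₂ t.2.2 hV₂ ∘ σ.2.2 := by
          funext j
          exact Fin.append_right _ _ j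
        have hgw : g' (⟨(enumF r t.1 hU ∘ σ.1,
             Fin.append (enumF m₁ t.2.1 hV₁ ∘ σ.2.1) (enumF m₂ t.2.2 hV₂ ∘ σ.2.2)),
            hbinj σ⟩ : W) = t := by
          show (Finset.image (enumF r t.1 hU ∘ σ.1) Finset.univ,
            Finset.image _ Finset.univ, Finset.image _ Finset.univ) = t
          rw [hb₁, hb₂, himu, image_comp_equiv, image_enumF, image_comp_equiv, image_enumF]
        refine Finset.mem_filter.mpr ⟨hNfin.mem_toFinset.mpr ⟨?_, ?_⟩, hgw⟩
        · set w₀ : W := ⟨(enumF r t.1 hU ∘ σ.1,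
             Fin.append (enumF m₁ t.2.1 hV₁ ∘ σ.2.1) (enumF m₂ t.2.2 hV₂ ∘ σ.2.2)),
            hbinj σ⟩ with hw₀
          have him1 : Finset.image (c₁ w₀) Finset.univ = t.1 ∪ t.2.1 := by
            rw [himc₁ w₀]
            show Finset.image (enumF r t.1 hU ∘ σ.1) Finset.univ ∪
              Finset.image (fun j : Fin m₁ => _) Finset.univ = _
            rw [hb₁, himu, image_comp_equiv, image_enumF]
          rw [sym_canon a1 hsym1 hcond.1 (hc₁inj w₀) him1]
          exact hz1
        · set w₀ : W := ⟨(enumF r t.1 hU ∘ σ.1,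
             Fin.append (enumF m₁ t.2.1 hV₁ ∘ σ.2.1) (enumF m₂ t.2.2 hV₂ ∘ σ.2.2)),
            hbinj σ⟩ with hw₀
          have him2 : Finset.image (c₂ w₀) Finset.univ = t.1 ∪ t.2.2 := by
            rw [himc₂ w₀]
            show Finset.image (enumF r t.1 hU ∘ σ.1) Finset.univ ∪
              Finset.image (fun j : Fin m₂ => _) Finset.univ = _
            rw [hb₂, himu, image_comp_equiv, image_enumF]
          rw [sym_canon a2 hsym2 hcond.2 (hc₂inj w₀) him2]
          exact hz2
      · intro σ _ τ _ h
        have h' := congrArg Subtype.val h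
        have hu : enumF r t.1 hU ∘ ⇑σ.1 = enumF r t.1 hU ∘ ⇑τ.1 := congrArg Prod.fst h'
        have hv : Fin.append (enumF m₁ t.2.1 hV₁ ∘ ⇑σ.2.1) (enumF m₂ t.2.2 hV₂ ∘ ⇑σ.2.2)
            = Fin.append (enumF m₁ t.2.1 hV₁ ∘ ⇑τ.2.1) (enumF m₂ t.2.2 hV₂ ∘ ⇑τ.2.2) :=
          congrArg Prod.snd h'
        have hσ1 : σ.1 = τ.1 := by
          refine Equiv.ext (fun p => enumF_injective hU ?_)
          exact congrFun hu p
        have hσ21 : σ.2.1 = τ.2.1 := by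
          refine Equiv.ext (fun p => enumF_injective hV₁ ?_)
          have := congrFun hv (Fin.castAdd m₂ p)
          rwa [Fin.append_left, Fin.append_left] at this
        have hσ22 : σ.2.2 = τ.2.2 := by
          refine Equiv.ext (fun p => enumF_injective hV₂ ?_)
          have := congrFun hv (Fin.natAdd m₁ p)
          rwa [Fin.append_right, Fin.append_right] at this
        exact Prod.ext hσ1 (Prod.ext hσ21 hσ22)
      · intro w hw
        obtain ⟨hwN, hg⟩ := Finset.mem_filter.mp hw
        have himg := hfib_img w hw
        obtain ⟨σ₀, hσ₀⟩ := exists_perm t.1 hU w.1.1 (append_inj_left w.2) himg.1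
        obtain ⟨σ₁, hσ₁⟩ := exists_perm t.2.1 hV₁ _ (hv₁inj w) himg.2.1
        obtain ⟨σ₂, hσ₂⟩ := exists_perm t.2.2 hV₂ _ (hv₂inj w) himg.2.2
        refine ⟨(σ₀, σ₁, σ₂), Finset.mem_univ _, ?_⟩
        apply Subtype.ext
        apply Prod.ext
        · exact hσ₀.symm
        · funext p
          induction p using Fin.addCases with
          | left j =>
            show Fin.append _ _ (Fin.castAdd m₂ j) = _
            rw [Fin.append_left]
            exact (congrFun hσ₁ j).symm
          | right j =>
            show Fin.append _ _ (Fin.natAdd m₁ j) = _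
            rw [Fin.append_right]
            exact (congrFun hσ₂ j).symm
    rw [hcard]
    simp [Fintype.card_perm, Nat.mul_assoc]

lemma Gtriple_eq_GS (k₁ k₂ : ℕ) (a1 : (Fin k₁ → ℕ+) → ℝ) (a2 : (Fin k₂ → ℕ+) → ℝ)
    (ε : ℕ+ → ℝ) (t : Finset ℕ+ × Finset ℕ+ × Finset ℕ+)
    (hd1 : Disjoint t.1 t.2.1) (hd2 : Disjoint t.1 t.2.2)
    (hc1 : (t.1 ∪ t.2.1).card = k₁) (hc2 : (t.1 ∪ t.2.2).card = k₂) :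
    Gtriple k₁ k₂ a1 a2 ε t = GS k₁ a1 ε (t.1 ∪ t.2.1) * GS k₂ a2 ε (t.1 ∪ t.2.2) := by
  rw [Gtriple, dif_pos ⟨hc1, hc2⟩, GS, dif_pos hc1, GS, dif_pos hc2,
    Finset.prod_union hd1, Finset.prod_union hd2, Finset.prod_pow]
  ring

lemma core (k₁ k₂ : ℕ) (a1 : (Fin k₁ → ℕ+) → ℝ) (a2 : (Fin k₂ → ℕ+) → ℝ)
    (ε : ℕ+ → ℝ) (T : Finset ℕ+) :
    ∑ A ∈ T.powerset.filter (fun A => A.card = k₁),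
      ∑ B ∈ T.powerset.filter (fun B => B.card = k₂), GS k₁ a1 ε A * GS k₂ a2 ε B
    = ∑ r ∈ Finset.range (min k₁ k₂ + 1),
        ∑ t ∈ TriSet T r (k₁ - r) (k₂ - r), Gtriple k₁ k₂ a1 a2 ε t := by
  classical
  rw [← Finset.sum_product']
  have hmaps : ∀ p ∈ (T.powerset.filter (fun A => A.card = k₁)) ×ˢ
      (T.powerset.filter (fun B => B.card = k₂)),
      (p.1 ∩ p.2).card ∈ Finset.range (min k₁ k₂ + 1) := by
    intro p hp
    obtain ⟨h1, h2⟩ := Finset.mem_product.mp hp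
    have hA := (Finset.mem_filter.mp h1).2
    have hB := (Finset.mem_filter.mp h2).2
    have c1 : (p.1 ∩ p.2).card ≤ k₁ := hA ▸ Finset.card_le_card Finset.inter_subset_left
    have c2 : (p.1 ∩ p.2).card ≤ k₂ := hB ▸ Finset.card_le_card Finset.inter_subset_right
    rw [Finset.mem_range]
    omega
  rw [← Finset.sum_fiberwise_of_maps_to hmaps]
  refine Finset.sum_congr rfl (fun r hr => ?_)
  have hrm : r ≤ min k₁ k₂ := by
    have := Finset.mem_range.mp hr
    omega
  refine Finset.sum_nbij' (fun p => (p.1 ∩ p.2, p.1 \ p.2, p.2 \ p.1))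
    (fun t => (t.1 ∪ t.2.1, t.1 ∪ t.2.2)) ?_ ?_ ?_ ?_ ?_
  · intro p hp
    obtain ⟨hp', hpr⟩ := Finset.mem_filter.mp hp
    obtain ⟨h1, h2⟩ := Finset.mem_product.mp hp'
    obtain ⟨hAT, hA⟩ := Finset.mem_filter.mp h1
    obtain ⟨hBT, hB⟩ := Finset.mem_filter.mp h2
    rw [Finset.mem_powerset] at hAT hBT
    show (p.1 ∩ p.2, p.1 \ p.2, p.2 \ p.1) ∈ TriSet T r (k₁ - r) (k₂ - r)
    rw [TriSet, Finset.mem_filter]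
    have hsd1 : (p.1 \ p.2).card + (p.1 ∩ p.2).card = p.1.card :=
      Finset.card_sdiff_add_card_inter p.1 p.2
    have hsd2 : (p.2 \ p.1).card + (p.2 ∩ p.1).card = p.2.card :=
      Finset.card_sdiff_add_card_inter p.2 p.1
    rw [Finset.inter_comm p.2 p.1] at hsd2
    refine ⟨?_, hpr, (by show (p.1 \ p.2).card = k₁ - r; omega),
      (by show (p.2 \ p.1).card = k₂ - r; omega), ?_, ?_, ?_⟩
    · rw [Finset.mem_product, Finset.mem_product, Finset.mem_powerset, Finset.mem_powerset,
        Finset.mem_powerset]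
      exact ⟨fun x hx => hAT (Finset.mem_inter.mp hx).1,
        fun x hx => hAT (Finset.mem_sdiff.mp hx).1,
        fun x hx => hBT (Finset.mem_sdiff.mp hx).1⟩
    · rw [Finset.disjoint_left]
      intro x hx hx'
      exact (Finset.mem_sdiff.mp hx').2 (Finset.mem_inter.mp hx).2
    · rw [Finset.disjoint_left]
      intro x hx hx'
      exact (Finset.mem_sdiff.mp hx').2 (Finset.mem_inter.mp hx).1
    · exact disjoint_sdiff_sdiff
  · intro t ht
    show (t.1 ∪ t.2.1, t.1 ∪ t.2.2) ∈ _
    obtain ⟨htpow, hU, hV₁, hV₂, hd1, hd2, hd3⟩ := Finset.mem_filter.mp (by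
      rw [TriSet] at ht; exact ht)
    rw [Finset.mem_product, Finset.mem_product] at htpow
    obtain ⟨hUT, hV₁T, hV₂T⟩ := htpow
    rw [Finset.mem_powerset] at hUT hV₁T hV₂T
    have hinter : (t.1 ∪ t.2.1) ∩ (t.1 ∪ t.2.2) = t.1 := by
      ext x
      simp only [Finset.mem_inter, Finset.mem_union]
      constructor
      · rintro ⟨h1 | h1, h2 | h2⟩
        · exact h1
        · exact h1
        · exact h2
        · exact absurd h2 (Finset.disjoint_left.mp hd3 h1)
      · intro h
        exact ⟨Or.inl h, Or.inl h⟩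
    rw [Finset.mem_filter]
    constructor
    · rw [Finset.mem_product, Finset.mem_filter, Finset.mem_filter, Finset.mem_powerset,
        Finset.mem_powerset]
      refine ⟨⟨Finset.union_subset hUT hV₁T, ?_⟩, Finset.union_subset hUT hV₂T, ?_⟩
      · rw [Finset.card_union_of_disjoint hd1, hU, hV₁]
        omega
      · rw [Finset.card_union_of_disjoint hd2, hU, hV₂]
        omega
    · rw [hinter, hU]
  · intro p hp
    have h1 : p.1 ∩ p.2 ∪ p.1 \ p.2 = p.1 := by
      ext x
      simp only [Finset.mem_union, Finset.mem_inter, Finset.mem_sdiff]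
      tauto
    have h2 : p.1 ∩ p.2 ∪ p.2 \ p.1 = p.2 := by
      ext x
      simp only [Finset.mem_union, Finset.mem_inter, Finset.mem_sdiff]
      tauto
    show (p.1 ∩ p.2 ∪ p.1 \ p.2, p.1 ∩ p.2 ∪ p.2 \ p.1) = p
    rw [h1, h2]
  · intro t ht
    obtain ⟨-, hU, hV₁, hV₂, hd1, hd2, hd3⟩ := Finset.mem_filter.mp (by
      rw [TriSet] at ht; exact ht)
    have e1 : (t.1 ∪ t.2.1) ∩ (t.1 ∪ t.2.2) = t.1 := by
      ext x
      simp only [Finset.mem_inter, Finset.mem_union]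
      constructor
      · rintro ⟨h1 | h1, h2 | h2⟩
        · exact h1
        · exact h1
        · exact h2
        · exact absurd h2 (Finset.disjoint_left.mp hd3 h1)
      · intro h; exact ⟨Or.inl h, Or.inl h⟩
    have e2 : (t.1 ∪ t.2.1) \ (t.1 ∪ t.2.2) = t.2.1 := by
      ext x
      simp only [Finset.mem_sdiff, Finset.mem_union]
      constructor
      · rintro ⟨h1 | h1, h2⟩
        · exact absurd (Or.inl h1) h2
        · exact h1
      · intro h
        refine ⟨Or.inr h, ?_⟩
        rintro (h' | h')
        · exact Finset.disjoint_left.mp hd1 h' h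
        · exact Finset.disjoint_left.mp hd3 h h'
    have e3 : (t.1 ∪ t.2.2) \ (t.1 ∪ t.2.1) = t.2.2 := by
      ext x
      simp only [Finset.mem_sdiff, Finset.mem_union]
      constructor
      · rintro ⟨h1 | h1, h2⟩
        · exact absurd (Or.inl h1) h2
        · exact h1
      · intro h
        refine ⟨Or.inr h, ?_⟩
        rintro (h' | h')
        · exact Finset.disjoint_left.mp hd2 h' h
        · exact Finset.disjoint_left.mp hd3 h' h
    show ((t.1 ∪ t.2.1) ∩ (t.1 ∪ t.2.2), (t.1 ∪ t.2.1) \ (t.1 ∪ t.2.2),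
      (t.1 ∪ t.2.2) \ (t.1 ∪ t.2.1)) = t
    rw [e1, e2, e3]
  · intro p hp
    obtain ⟨hp', hpr⟩ := Finset.mem_filter.mp hp
    obtain ⟨h1, h2⟩ := Finset.mem_product.mp hp'
    have hA := (Finset.mem_filter.mp h1).2
    have hB := (Finset.mem_filter.mp h2).2
    have hu1 : p.1 ∩ p.2 ∪ p.1 \ p.2 = p.1 := by
      ext x
      simp only [Finset.mem_union, Finset.mem_inter, Finset.mem_sdiff]
      tauto
    have hu2 : p.1 ∩ p.2 ∪ p.2 \ p.1 = p.2 := by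
      ext x
      simp only [Finset.mem_union, Finset.mem_inter, Finset.mem_sdiff]
      tauto
    have hd1 : Disjoint (p.1 ∩ p.2) (p.1 \ p.2) := by
      rw [Finset.disjoint_left]
      intro x hx hx'
      exact (Finset.mem_sdiff.mp hx').2 (Finset.mem_inter.mp hx).2
    have hd2 : Disjoint (p.1 ∩ p.2) (p.2 \ p.1) := by
      rw [Finset.disjoint_left]
      intro x hx hx'
      exact (Finset.mem_sdiff.mp hx').2 (Finset.mem_inter.mp hx).1
    show GS k₁ a1 ε p.1 * GS k₂ a2 ε p.2
      = Gtriple k₁ k₂ a1 a2 ε (p.1 ∩ p.2, p.1 \ p.2, p.2 \ p.1)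
    rw [Gtriple_eq_GS k₁ k₂ a1 a2 ε (p.1 ∩ p.2, p.1 \ p.2, p.2 \ p.1) hd1 hd2
      (by show (p.1 ∩ p.2 ∪ p.1 \ p.2).card = k₁; rw [hu1]; exact hA)
      (by show (p.1 ∩ p.2 ∪ p.2 \ p.1).card = k₂; rw [hu2]; exact hB)]
    show _ = GS k₁ a1 ε (p.1 ∩ p.2 ∪ p.1 \ p.2) * GS k₂ a2 ε (p.1 ∩ p.2 ∪ p.2 \ p.1)
    rw [hu1, hu2]

/-- Product formula for two off-diagonal polynomial forms with finitely supported
symmetric coefficients: the product of the two off-diagonal sums equals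
`∑_{r=0}^{min(k₁,k₂)} r!·C(k₁,r)·C(k₂,r)` times the off-diagonal sum over combined tuples
`(u,i)` of length `k₁+k₂-r`, with `r` paired variables contributing `ε(u_q)²`. -/
theorem stmt_18 (k₁ k₂ : ℕ) (hk₁ : 1 ≤ k₁) (hk₂ : 1 ≤ k₂)
    (a1 : (Fin k₁ → ℕ+) → ℝ) (a2 : (Fin k₂ → ℕ+) → ℝ)
    (hfin1 : (Function.support a1).Finite) (hfin2 : (Function.support a2).Finite)
    (hsym1 : ∀ σ : Equiv.Perm (Fin k₁), ∀ v : Fin k₁ → ℕ+, a1 (v ∘ σ) = a1 v)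
    (hsym2 : ∀ σ : Equiv.Perm (Fin k₂), ∀ v : Fin k₂ → ℕ+, a2 (v ∘ σ) = a2 v)
    (ε : ℕ+ → ℝ) :
    (∑' i : {i : Fin k₁ → ℕ+ // Function.Injective i}, a1 i.1 * ∏ p, ε (i.1 p)) *
      (∑' i : {i : Fin k₂ → ℕ+ // Function.Injective i}, a2 i.1 * ∏ p, ε (i.1 p))
    = ∑ r ∈ (Finset.range (min k₁ k₂ + 1)).attach,
        ((r.1.factorial : ℝ) * (k₁.choose r.1 : ℝ) * (k₂.choose r.1 : ℝ)) *
        ∑' w : {w : (Fin r.1 → ℕ+) × (Fin ((k₁ - r.1) + (k₂ - r.1)) → ℕ+) //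
                  Function.Injective (Fin.append w.1 w.2)},
            a1 (fun q =>
              Fin.append w.1.1
                (fun j : Fin (k₁ - r.1) => w.1.2 (Fin.castAdd (k₂ - r.1) j))
                (Fin.cast (by have := Finset.mem_range.mp r.2; omega) q)) *
            a2 (fun q =>
              Fin.append w.1.1
                (fun j : Fin (k₂ - r.1) => w.1.2 (Fin.natAdd (k₁ - r.1) j))
                (Fin.cast (by have := Finset.mem_range.mp r.2; omega) q)) *
            (∏ q : Fin r.1, (ε (w.1.1 q)) ^ 2) *
            ∏ p : Fin ((k₁ - r.1) + (k₂ - r.1)), ε (w.1.2 p) := by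
  classical
  set T : Finset ℕ+ := hfin1.toFinset.biUnion (fun i => Finset.image i Finset.univ) ∪
    hfin2.toFinset.biUnion (fun i => Finset.image i Finset.univ) with hTdef
  have hT1 : ∀ i ∈ Function.support a1, ∀ p, i p ∈ T := by
    intro i hi p
    exact Finset.mem_union_left _ (Finset.mem_biUnion.mpr ⟨i, hfin1.mem_toFinset.mpr hi,
      Finset.mem_image_of_mem _ (Finset.mem_univ p)⟩)
  have hT2 : ∀ i ∈ Function.support a2, ∀ p, i p ∈ T := by
    intro i hi p
    exact Finset.mem_union_right _ (Finset.mem_biUnion.mpr ⟨i, hfin2.mem_toFinset.mpr hi,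
      Finset.mem_image_of_mem _ (Finset.mem_univ p)⟩)
  rw [factorL k₁ a1 hfin1 hsym1 ε T hT1, factorL k₂ a2 hfin2 hsym2 ε T hT2]
  calc ((k₁.factorial : ℝ) * ∑ A ∈ T.powerset.filter (fun A => A.card = k₁), GS k₁ a1 ε A) *
        ((k₂.factorial : ℝ) * ∑ B ∈ T.powerset.filter (fun B => B.card = k₂), GS k₂ a2 ε B)
      = ((k₁.factorial * k₂.factorial : ℕ) : ℝ) *
        ∑ A ∈ T.powerset.filter (fun A => A.card = k₁),
          ∑ B ∈ T.powerset.filter (fun B => B.card = k₂), GS k₁ a1 ε A * GS k₂ a2 ε B := by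
        rw [← Finset.sum_mul_sum]
        push_cast
        ring
    _ = ((k₁.factorial * k₂.factorial : ℕ) : ℝ) *
        ∑ r ∈ Finset.range (min k₁ k₂ + 1),
          ∑ t ∈ TriSet T r (k₁ - r) (k₂ - r), Gtriple k₁ k₂ a1 a2 ε t := by
        rw [core]
    _ = ∑ r ∈ Finset.range (min k₁ k₂ + 1),
          ((k₁.factorial * k₂.factorial : ℕ) : ℝ) *
          ∑ t ∈ TriSet T r (k₁ - r) (k₂ - r), Gtriple k₁ k₂ a1 a2 ε t := by
        rw [Finset.mul_sum]
    _ = ∑ r ∈ (Finset.range (min k₁ k₂ + 1)).attach,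
          ((k₁.factorial * k₂.factorial : ℕ) : ℝ) *
          ∑ t ∈ TriSet T r.1 (k₁ - r.1) (k₂ - r.1), Gtriple k₁ k₂ a1 a2 ε t := by
        rw [Finset.sum_attach (Finset.range (min k₁ k₂ + 1)) (fun r =>
          ((k₁.factorial * k₂.factorial : ℕ) : ℝ) *
          ∑ t ∈ TriSet T r (k₁ - r) (k₂ - r), Gtriple k₁ k₂ a1 a2 ε t)]
    _ = _ := by
        refine Finset.sum_congr rfl (fun r _ => ?_)
        have hr1 : r.1 ≤ k₁ := by
          have := Finset.mem_range.mp r.2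
          omega
        have hr2 : r.1 ≤ k₂ := by
          have := Finset.mem_range.mp r.2
          omega
        have e₁ : k₁ = r.1 + (k₁ - r.1) := by omega
        have e₂ : k₂ = r.1 + (k₂ - r.1) := by omega
        have hfw := factorW k₁ k₂ r.1 (k₁ - r.1) (k₂ - r.1) e₁ e₂ a1 a2 hfin1 hfin2
          hsym1 hsym2 ε T hT1 hT2
        have hnat : r.1.factorial * k₁.choose r.1 * k₂.choose r.1 *
            (r.1.factorial * (k₁ - r.1).factorial * (k₂ - r.1).factorial)
            = k₁.factorial * k₂.factorial := by
          have h1 := Nat.choose_mul_factorial_mul_factorial hr1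
          have h2 := Nat.choose_mul_factorial_mul_factorial hr2
          calc r.1.factorial * k₁.choose r.1 * k₂.choose r.1 *
              (r.1.factorial * (k₁ - r.1).factorial * (k₂ - r.1).factorial)
              = (k₁.choose r.1 * r.1.factorial * (k₁ - r.1).factorial) *
                (k₂.choose r.1 * r.1.factorial * (k₂ - r.1).factorial) := by ring
            _ = k₁.factorial * k₂.factorial := by rw [h1, h2]
        refine Eq.symm ((congrArg (fun z =>
          ((r.1.factorial : ℝ) * (k₁.choose r.1 : ℝ) * (k₂.choose r.1 : ℝ)) * z) hfw).trans ?_)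
        rw [← mul_assoc]
        congr 1
        rw [show ((k₁.factorial * k₂.factorial : ℕ) : ℝ)
          = ((r.1.factorial * k₁.choose r.1 * k₂.choose r.1 *
            (r.1.factorial * (k₁ - r.1).factorial * (k₂ - r.1).factorial) : ℕ) : ℝ) from by
            rw [hnat]]
        push_cast
        ring
end
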